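/- arXiv:2512.03554 — 2 statements merged into one kernel-verified Lean document; each statement's English description precedes it below -/
import Mathlib

section
/- Let μ = 4. Let S_+ and S_− be the ℂQ/I-modules with ℂ at every vertex, where for S_+ all α_i act as the identity and all β_i as zero, and for S_− all α_i act as zero and all β_i as the identity; and for i = 1,2,3 let S_i be the cone of α_{4−i}+β_{4−i} : P(5−i) → P(4−i) in D = D^b mod(ℂQ/I). Then RHom_D(S_+, S_i) ≅ 0 and RHom_D(S_−, S_i) ≅ 0 for i = 1,2,3, and RHom_D(S_+, S_−) ≅ 0. -/
namespace CHS

open CategoryTheory Limits Pretriangulated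

universe v u

variable {D : Type u} [Category.{v} D]

section Defs

variable [Preadditive D] [HasZeroObject D] [HasShift D ℤ]
  [∀ n : ℤ, (shiftFunctor D n).Additive] [Pretriangulated D] [Linear ℂ D]

/-- `homsAre X Y c` says that for each `p : ℤ` the Hom space `Hom(X, Y⟦p⟧)` is isomorphic to
`ℂ^{c p}`.  Since an object `V` of `D^b(mod ℂ)` is determined up to isomorphism by the dimensions
of its cohomologies, and `H^p(RHom(X, Y)) = Hom(X, Y[p])`, this is a faithful rendering of
`RHom(X, Y) ≅ ⊕_p ℂ^{c p}[-p]` in `D^b(mod ℂ)`. -/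
def homsAre (X Y : D) (c : ℤ → ℕ) : Prop :=
  ∀ p : ℤ, Nonempty ((X ⟶ Y⟦p⟧) ≃ₗ[ℂ] (Fin (c p) → ℂ))

/-- `E` is an exceptional object: `RHom(E, E) ≅ ℂ·id`. -/
def IsExceptionalObj (X : D) : Prop :=
  homsAre X X fun p => if p = 0 then 1 else 0

/-- Membership in the smallest strictly full triangulated subcategory of `D`
containing the set `S`. -/
inductive inTriaClosure (S : Set D) : D → Prop
  | of {X : D} (hX : X ∈ S) : inTriaClosure S X
  | zero {X : D} (hX : IsZero X) : inTriaClosure S X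
  | iso {X Y : D} (e : X ≅ Y) (hX : inTriaClosure S X) : inTriaClosure S Y
  | shift {X : D} (n : ℤ) (hX : inTriaClosure S X) : inTriaClosure S (X⟦n⟧)
  | ext {T : Triangle D} (hT : T ∈ distinguishedTriangles (C := D))
      (h₁ : inTriaClosure S T.obj₁) (h₃ : inTriaClosure S T.obj₃) : inTriaClosure S T.obj₂

/-- `(E 0, …, E (n-1))` is an exceptional collection. -/
def IsExceptionalCollection {n : ℕ} (E : Fin n → D) : Prop :=
  (∀ i, IsExceptionalObj (E i)) ∧
    ∀ i j : Fin n, j < i → ∀ (p : ℤ) (f : E i ⟶ (E j)⟦p⟧), f = 0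

/-- The collection generates `D` as a triangulated category. -/
def IsFullCollection {n : ℕ} (E : Fin n → D) : Prop :=
  ∀ X : D, inTriaClosure (Set.range E) X

/-- Full exceptional collection. -/
def IsFEC {n : ℕ} (E : Fin n → D) : Prop :=
  IsExceptionalCollection E ∧ IsFullCollection E

/-- A collection is strong if `Hom(E_i, E_j[p]) = 0` for all `i, j` and all `p ≠ 0`. -/
def IsStrongCollection {n : ℕ} (E : Fin n → D) : Prop :=
  ∀ i j : Fin n, ∀ p : ℤ, p ≠ 0 → ∀ f : E i ⟶ (E j)⟦p⟧, f = 0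

/-- composite of the chain of morphisms `P (j+k) ⟶ P (j+k-1) ⟶ ⋯ ⟶ P j`. -/
def pathComp (P : ℕ → D) (f : ∀ i : ℕ, P (i + 1) ⟶ P i) (j : ℕ) : ∀ k : ℕ, (P (j + k) ⟶ P j)
  | 0 => 𝟙 _
  | k + 1 => f (j + k) ≫ pathComp P f j k

/-- A presentation of the triangulated category `D = D^b(mod ℂQ/I)` for the quiver `Q` with
vertices `1, …, μ`, double arrows `α_i, β_i : i → i+1` and relations
`α_i β_{i+1} = β_i α_{i+1} = 0`:  `P i` is the indecomposable projective at the vertex `i`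
(for `1 ≤ i ≤ μ`), `a i` (resp. `b i`) is the morphism `P (i+1) ⟶ P i` given by right
multiplication with the arrow `α_i` (resp. `β_i`); `(P μ, …, P 1)` is a full strong exceptional
collection, `Hom(P i, P j)` has as a basis the (two, for `j < i`) nonzero paths from `j` to `i`,
namely the pure `α`-path and the pure `β`-path, and the mixed composites vanish. -/
structure Setup (μ : ℕ) (D : Type u) [Category.{v} D] [Preadditive D] [HasZeroObject D]
    [HasShift D ℤ] [∀ n : ℤ, (shiftFunctor D n).Additive] [Pretriangulated D] [Linear ℂ D] where
  P : ℕ → D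
  a : ∀ i : ℕ, P (i + 1) ⟶ P i
  b : ∀ i : ℕ, P (i + 1) ⟶ P i
  rel_ab : ∀ i : ℕ, a (i + 1) ≫ b i = 0
  rel_ba : ∀ i : ℕ, b (i + 1) ≫ a i = 0
  hom_dims : ∀ i j : ℕ, 1 ≤ i → i ≤ μ → 1 ≤ j → j ≤ μ →
      homsAre (P i) (P j)
        (fun p => if p = 0 then (if i = j then 1 else if j < i then 2 else 0) else 0)
  hom_basis : ∀ j k : ℕ, 1 ≤ j → 1 ≤ k → j + k ≤ μ →
      ∃ B : Module.Basis (Fin 2) ℂ (P (j + k) ⟶ P j),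
        B 0 = pathComp P a j k ∧ B 1 = pathComp P b j k
  full : ∀ X : D, inTriaClosure {Y : D | ∃ i : ℕ, 1 ≤ i ∧ i ≤ μ ∧ Y = P i} X

/-- A Serre functor on `D`: an autoequivalence `S` together with perfect pairings
`Hom(X, Y) ⊗ Hom(Y, S X) → ℂ`, `(f, g) ↦ tr (f ≫ g)`, realizing the bifunctorial
isomorphisms `Hom(X, Y) ≅ Hom(Y, S X)^*`. -/
structure SerreData (D : Type u) [Category.{v} D] [Preadditive D] [Linear ℂ D] where
  S : D ⥤ D
  isEquivalence : S.IsEquivalence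
  trace : ∀ X : D, (X ⟶ S.obj X) →ₗ[ℂ] ℂ
  comm : ∀ {X Y : D} (h : Y ⟶ X) (u : X ⟶ S.obj Y),
      trace Y (h ≫ u) = trace X (u ≫ S.map h)
  nondeg : ∀ {X Y : D} (f : X ⟶ Y), f ≠ 0 → ∃ g : Y ⟶ S.obj X, trace X (f ≫ g) ≠ 0
  perfect : ∀ {X Y : D} (φ : (Y ⟶ S.obj X) →ₗ[ℂ] ℂ), ∃ f : X ⟶ Y, ∀ g, φ g = trace X (f ≫ g)

/-- Data exhibiting `S` as (an object isomorphic to) the totalization of the four-term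
complex `W → X → Y → Z` (with `Z` in degree `0`) of objects of `D`;
`K₁ = [W → X]`, `K₂ = [W → X → Y]` are the intermediate (iterated) cones. -/
structure TotData (W X Y Z S : D) (f : W ⟶ X) (g : X ⟶ Y) (h : Y ⟶ Z) where
  K₁ : D
  ι₁ : X ⟶ K₁
  δ₁ : K₁ ⟶ W⟦(1 : ℤ)⟧
  tri₁ : Triangle.mk f ι₁ δ₁ ∈ distinguishedTriangles (C := D)
  v₁ : K₁ ⟶ Y
  fac₁ : ι₁ ≫ v₁ = g
  K₂ : D
  ι₂ : Y ⟶ K₂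
  δ₂ : K₂ ⟶ K₁⟦(1 : ℤ)⟧
  tri₂ : Triangle.mk v₁ ι₂ δ₂ ∈ distinguishedTriangles (C := D)
  v₂ : K₂ ⟶ Z
  fac₂ : ι₂ ≫ v₂ = h
  ι₃ : Z ⟶ S
  δ₃ : S ⟶ K₂⟦(1 : ℤ)⟧
  tri₃ : Triangle.mk v₂ ι₃ δ₃ ∈ distinguishedTriangles (C := D)

end Defs

/-- `n`-th power of an (auto)equivalence. -/
def eqPowNat (T : D ≌ D) : ℕ → (D ≌ D)
  | 0 => CategoryTheory.Equivalence.refl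
  | n + 1 => (eqPowNat T n).trans T

/-- `k`-th power (`k : ℤ`) of an autoequivalence. -/
def eqPow (T : D ≌ D) : ℤ → (D ≌ D)
  | Int.ofNat n => eqPowNat T n
  | Int.negSucc n => (eqPowNat T (n + 1)).symm

section Twist

variable [Preadditive D] [HasZeroObject D] [HasShift D ℤ]
  [∀ n : ℤ, (shiftFunctor D n).Additive] [Pretriangulated D] [Linear ℂ D]
  [HasFiniteBiproducts D] [∀ X Y : D, FiniteDimensional ℂ (X ⟶ Y)]

/-- The object `⊕_{|p| ≤ N} Hom(S, X[p]) ⊗ S[-p]`, i.e. `RHom(S,X) ⊗ S` when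
`Hom(S, X[p]) = 0` for `|p| > N`. -/
noncomputable def sTensor (S X : D) (N : ℕ) : D :=
  biproduct (fun pq : Σ p : (Finset.Icc (-(N : ℤ)) (N : ℤ)),
      Fin (Module.finrank ℂ (S ⟶ X⟦(p.1 : ℤ)⟧)) => S⟦(-(pq.1.1 : ℤ))⟧)

/-- The canonical evaluation morphism `RHom(S,X) ⊗ S ⟶ X` (each basis vector
`f : S ⟶ X⟦p⟧` of `Hom(S, X⟦p⟧)` evaluates via `f⟦-p⟧` composed with `X⟦p⟧⟦-p⟧ ≅ X`). -/
noncomputable def sTensorEv (S X : D) (N : ℕ) : sTensor S X N ⟶ X :=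
  biproduct.desc fun pq =>
    ((Module.finBasis ℂ (S ⟶ X⟦(pq.1.1 : ℤ)⟧) pq.2)⟦(-(pq.1.1 : ℤ))⟧') ≫
      (shiftFunctorCompIsoId D (pq.1.1 : ℤ) (-(pq.1.1 : ℤ)) (by ring)).hom.app X

/-- `Hom(S, X[p]) = 0` for `|p| > N`. -/
def homBound (S X : D) (N : ℕ) : Prop :=
  ∀ p : ℤ, ((p < -(N : ℤ)) ∨ ((N : ℤ) < p)) → ∀ f : S ⟶ X⟦p⟧, f = 0

/-- `L` is the left mutation `L_A B`, i.e. there is a distinguished triangle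
`L → RHom(A, B) ⊗ A → B → L[1]` whose middle map is the canonical evaluation. -/
def IsLeftMutation (A B L : D) : Prop :=
  ∃ (N : ℕ) (u : L ⟶ sTensor A B N) (w : B ⟶ L⟦(1 : ℤ)⟧),
    homBound A B N ∧ Triangle.mk u (sTensorEv A B N) w ∈ distinguishedTriangles (C := D)

/-- `T` is the spherical twist along `S`: it is an autoequivalence and for every `X` there
is a distinguished triangle `RHom(S, X) ⊗ S → X → T X → (RHom(S, X) ⊗ S)[1]` whose first
map is the canonical evaluation. -/
structure IsSphericalTwist (S : D) (T : D ⥤ D) : Prop where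
  isEquivalence : T.IsEquivalence
  twistTriangle : ∀ X : D, ∃ (N : ℕ) (g : X ⟶ T.obj X) (w : T.obj X ⟶ (sTensor S X N)⟦(1 : ℤ)⟧),
    homBound S X N ∧ Triangle.mk (sTensorEv S X N) g w ∈ distinguishedTriangles (C := D)

/-- Elementary moves on (isomorphism classes of) collections of `n` objects of `D`:
the braid group generators act by mutations, `ℤ^n` acts by objectwise translations, and
isomorphic collections are identified.  The orbit equivalence relation of the
`B_n ⋉ ℤ^n`-action on isomorphism classes of collections is `Relation.EqvGen (Move n)`. -/
inductive Move (n : ℕ) : (Fin n → D) → (Fin n → D) → Prop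
  | braid (E : Fin n → D) (i : ℕ) (h : i + 1 < n) (L : D)
      (hL : IsLeftMutation (E ⟨i, by omega⟩) (E ⟨i + 1, h⟩) L) :
      Move n E (fun j => if (j : ℕ) = i then L else if (j : ℕ) = i + 1 then E ⟨i, by omega⟩ else E j)
  | shift (E : Fin n → D) (m : Fin n → ℤ) : Move n E (fun j => (E j)⟦m j⟧)
  | iso (E E' : Fin n → D) (h : ∀ j, Nonempty (E j ≅ E' j)) : Move n E E'

end Twist

end CHS

namespace CHS

open CategoryTheory Limits Pretriangulated

universe v u

variable {D : Type u} [Category.{v} D] [Preadditive D] [HasZeroObject D] [HasShift D ℤ]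
  [∀ n : ℤ, (shiftFunctor D n).Additive] [Pretriangulated D] [Linear ℂ D]
section Statement8Infra

set_option linter.unusedSectionVars false
set_option maxHeartbeats 1600000

open ZeroObject

variable {D : Type u} [Category.{v} D] [Preadditive D] [HasZeroObject D] [HasShift D ℤ]
  [∀ n : ℤ, (shiftFunctor D n).Additive] [Pretriangulated D] [Linear ℂ D]

/-! ### Shift iso helpers -/

noncomputable def sIso (Y : D) (a b c : ℤ) (h : a + b = c) : (Y⟦a⟧)⟦b⟧ ≅ Y⟦c⟧ :=
  ((shiftFunctorAdd' D a b c h).app Y).symm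

noncomputable def s0Iso (Y : D) : Y⟦(0:ℤ)⟧ ≅ Y := (shiftFunctorZero D ℤ).app Y

noncomputable def downIso {Z Y : D} {r : ℤ} (E : Z ≅ Y⟦r⟧) : ((Z⟦(-1:ℤ)⟧ : D) ≅ Y⟦r-1⟧) :=
  (shiftFunctor D (-1:ℤ)).mapIso E ≪≫ sIso Y r (-1) (r-1) (by ring)

lemma vIso {X Z Z' : D} (e : Z ≅ Z') (h : ∀ g : X ⟶ Z', g = 0) (f : X ⟶ Z) : f = 0 := by
  have h1 : f ≫ e.hom = 0 := h _
  have h2 : f = (f ≫ e.hom) ≫ e.inv := by simp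
  rw [h2, h1, Limits.zero_comp]

/-! ### Source-shift helpers via the shift adjunction -/

lemma shiftFac {A B Z : D} (u : A ⟶ B)
    (H : ∀ h₀ : A ⟶ Z⟦(-1:ℤ)⟧, ∃ g₀ : B ⟶ Z⟦(-1:ℤ)⟧, h₀ = u ≫ g₀)
    (h : A⟦(1:ℤ)⟧ ⟶ Z) : ∃ gg : B⟦(1:ℤ)⟧ ⟶ Z, h = u⟦(1:ℤ)⟧' ≫ gg := by
  let adj := (shiftEquiv D (1:ℤ)).toAdjunction
  obtain ⟨g₀, hg₀⟩ := H (adj.homEquiv A Z h)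
  refine ⟨(adj.homEquiv B Z).symm g₀, ?_⟩
  apply (adj.homEquiv A Z).injective
  have hnat : adj.homEquiv A Z (u⟦(1:ℤ)⟧' ≫ (adj.homEquiv B Z).symm g₀)
      = u ≫ adj.homEquiv B Z ((adj.homEquiv B Z).symm g₀) :=
    Adjunction.homEquiv_naturality_left adj u _
  exact hg₀.trans ((congrArg (u ≫ ·) (Equiv.apply_symm_apply _ g₀)).symm.trans hnat.symm)

lemma vSrc {A Z : D} (H : ∀ h₀ : A ⟶ Z⟦(-1:ℤ)⟧, h₀ = 0) (h : A⟦(1:ℤ)⟧ ⟶ Z) : h = 0 := by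
  obtain ⟨gg, hg⟩ := shiftFac (u := (0 : A ⟶ A)) (fun h₀ => ⟨0, by rw [H h₀, Limits.zero_comp]⟩) h
  rw [hg]
  simp

/-! ### Triangle exactness helpers -/

lemma covMid {T : Triangle D} (hT : T ∈ distTriang D) (X : D) (q : ℤ)
    (h1 : ∀ g : X ⟶ T.obj₁⟦q⟧, g = 0) (h3 : ∀ g : X ⟶ T.obj₃⟦q⟧, g = 0)
    (f : X ⟶ T.obj₂⟦q⟧) : f = 0 := by
  have hT' := Triangle.shift_distinguished T hT q
  obtain ⟨g, hg⟩ := Triangle.coyoneda_exact₂ _ hT' f (by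
    show f ≫ (q.negOnePow • T.mor₂⟦q⟧') = 0
    rw [Linear.comp_units_smul, h3 (f ≫ T.mor₂⟦q⟧'), smul_zero])
  rw [hg]
  erw [h1 g, Limits.zero_comp]
  rfl

lemma covThird {T : Triangle D} (hT : T ∈ distTriang D) (X : D) (q : ℤ)
    (h2 : ∀ g : X ⟶ T.obj₂⟦q⟧, g = 0) (h1 : ∀ g : X ⟶ T.obj₁⟦q+1⟧, g = 0)
    (f : X ⟶ T.obj₃⟦q⟧) : f = 0 := by
  refine covMid (rot_of_distTriang _ hT) X q h2 ?_ f
  exact fun g => vIso (sIso T.obj₁ 1 q (q+1) (by ring)) h1 g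

lemma covKer {T : Triangle D} (hT : T ∈ distTriang D) (X : D)
    (hB : ∀ g : X ⟶ T.obj₂⟦(-1:ℤ)⟧, g = 0)
    (hinj : ∀ x : X ⟶ T.obj₁, x ≫ T.mor₁ = 0 → x = 0)
    (f : X ⟶ T.obj₃⟦(-1:ℤ)⟧) : f = 0 := by
  have hT' := Triangle.shift_distinguished T hT (-1)
  set T' := (CategoryTheory.shiftFunctor (Triangle D) (-1)).obj T with hT'def
  set e : ((T.obj₁⟦(-1:ℤ)⟧)⟦(1:ℤ)⟧ : D) ≅ T.obj₁ :=
    (shiftFunctorCompIsoId D (-1) 1 (by ring)).app T.obj₁ with hedef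
  set e2 : ((T.obj₂⟦(-1:ℤ)⟧)⟦(1:ℤ)⟧ : D) ≅ T.obj₂ :=
    (shiftFunctorCompIsoId D (-1) 1 (by ring)).app T.obj₂ with he2def
  change X ⟶ T'.obj₃ at f
  replace hB : ∀ g : X ⟶ T'.obj₂, g = 0 := hB
  have hx : f ≫ T'.mor₃ = 0 := by
    have hz : (f ≫ T'.mor₃) ≫ (T'.mor₁⟦(1:ℤ)⟧') = 0 := by
      erw [Category.assoc, comp_distTriang_mor_zero₃₁ _ hT', Limits.comp_zero]
    have hz2 : (f ≫ T'.mor₃) ≫ ((T.mor₁⟦(-1:ℤ)⟧')⟦(1:ℤ)⟧') = 0 := by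
      have hmor : T'.mor₁⟦(1:ℤ)⟧' = (-1 : ℤ).negOnePow • ((T.mor₁⟦(-1:ℤ)⟧')⟦(1:ℤ)⟧') := by
        show ((-1 : ℤ).negOnePow • (T.mor₁⟦(-1:ℤ)⟧'))⟦(1:ℤ)⟧' = _
        rw [Functor.map_units_smul]
      erw [hmor, Linear.comp_units_smul] at hz
      exact (smul_eq_zero_iff_eq _).mp hz
    have hnat : ((T.mor₁⟦(-1:ℤ)⟧')⟦(1:ℤ)⟧') ≫ e2.hom = e.hom ≫ T.mor₁ := by
      have := (shiftFunctorCompIsoId D (-1) 1 (by ring)).hom.naturality T.mor₁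
      simpa [hedef, he2def] using this
    have hx0 : ((f ≫ T'.mor₃) ≫ e.hom) ≫ T.mor₁ = 0 := by
      erw [Category.assoc, ← hnat, ← Category.assoc, hz2, Limits.zero_comp]
    have hres := hinj _ hx0
    exact (cancel_mono e.hom).mp (hres.trans Limits.zero_comp.symm)
  obtain ⟨g, hg⟩ := Triangle.coyoneda_exact₃ _ hT' f hx
  rw [hg, hB g, Limits.zero_comp]
  rfl

lemma covCoker {T : Triangle D} (hT : T ∈ distTriang D) (X : D)
    (hw : ∀ x : X ⟶ T.obj₁⟦(1:ℤ)⟧, x = 0)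
    (hsurj : ∀ y : X ⟶ T.obj₂, ∃ z : X ⟶ T.obj₁, y = z ≫ T.mor₁)
    (f : X ⟶ T.obj₃) : f = 0 := by
  obtain ⟨y, hy⟩ := Triangle.coyoneda_exact₃ _ hT f (hw _)
  obtain ⟨z, hz⟩ := hsurj y
  rw [hy, hz, Category.assoc, comp_distTriang_mor_zero₁₂ _ hT, Limits.comp_zero]

lemma coyMk₃ {A B C : D} {f : A ⟶ B} {g : B ⟶ C} {h : C ⟶ A⟦(1:ℤ)⟧}
    (hT : Triangle.mk f g h ∈ distTriang D) {X : D} (x : X ⟶ C) (hx : x ≫ h = 0) :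
    ∃ y : X ⟶ B, x = y ≫ g :=
  Triangle.coyoneda_exact₃ _ hT x hx

lemma coyMk₂ {A B C : D} {f : A ⟶ B} {g : B ⟶ C} {h : C ⟶ A⟦(1:ℤ)⟧}
    (hT : Triangle.mk f g h ∈ distTriang D) {X : D} (x : X ⟶ B) (hx : x ≫ g = 0) :
    ∃ y : X ⟶ A, x = y ≫ f :=
  Triangle.coyoneda_exact₂ _ hT x hx

/-- Main contravariant vanishing lemma for an iterated cone. -/
lemma coneVanish {A B K Z : D} {u : A ⟶ B} {ι : B ⟶ K} {δ : K ⟶ A⟦(1:ℤ)⟧}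
    (hT : Triangle.mk u ι δ ∈ distTriang D)
    (hinj : ∀ x : B ⟶ Z, u ≫ x = 0 → x = 0)
    (hfac : ∀ h₀ : A ⟶ Z⟦(-1:ℤ)⟧, ∃ g₀ : B ⟶ Z⟦(-1:ℤ)⟧, h₀ = u ≫ g₀)
    (f : K ⟶ Z) : f = 0 := by
  have h12 : u ≫ ι = 0 := comp_distTriang_mor_zero₁₂ _ hT
  have h1 : ι ≫ f = 0 := hinj _ (by rw [← Category.assoc, h12, Limits.zero_comp])
  obtain ⟨h, hh⟩ := Triangle.yoneda_exact₂ _ (rot_of_distTriang _ hT) f h1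
  obtain ⟨gg, hg⟩ := shiftFac u hfac h
  have h31 : δ ≫ u⟦(1:ℤ)⟧' = 0 := comp_distTriang_mor_zero₃₁ _ hT
  erw [hh, hg, ← Category.assoc]
  show (δ ≫ u⟦(1:ℤ)⟧') ≫ gg = 0
  rw [h31, Limits.zero_comp]

/-! ### Linear algebra helpers -/

lemma vanish_of_e0 {X Z : D} (e : (X ⟶ Z) ≃ₗ[ℂ] (Fin 0 → ℂ)) (f : X ⟶ Z) : f = 0 :=
  e.injective (Subsingleton.elim _ _)

lemma equiv0_of_vanish {X Z : D} (h : ∀ f : X ⟶ Z, f = 0) :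
    Nonempty ((X ⟶ Z) ≃ₗ[ℂ] (Fin 0 → ℂ)) :=
  ⟨LinearEquiv.ofLinear 0 0 (Subsingleton.elim _ _) (LinearMap.ext fun x => by simp [h x])⟩

lemma span1 {M : Type*} [AddCommGroup M] [Module ℂ M] (e : M ≃ₗ[ℂ] (Fin 1 → ℂ))
    {v : M} (hv : v ≠ 0) (x : M) : ∃ c : ℂ, x = c • v := by
  have hα : e v 0 ≠ 0 := by
    intro h
    apply hv
    have h2 : e v = 0 := funext fun i => by fin_cases i; exact h
    have h3 := congrArg e.symm h2
    simpa using h3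
  refine ⟨e x 0 / e v 0, ?_⟩
  have h0 : e (x - (e x 0 / e v 0) • v) = 0 := funext fun i => by
    fin_cases i
    simp [map_sub, map_smul, div_mul_cancel₀ _ hα]
  have h4 := congrArg e.symm h0
  simp only [LinearEquiv.symm_apply_apply, map_zero] at h4
  rw [sub_eq_zero] at h4
  exact h4

lemma span1_of_iso {X Z Z' : D} (e' : Z ≅ Z') (eq : (X ⟶ Z) ≃ₗ[ℂ] (Fin 1 → ℂ))
    {v : X ⟶ Z'} (hv : v ≠ 0) (x : X ⟶ Z') : ∃ c : ℂ, x = c • v := by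
  have hv' : v ≫ e'.inv ≠ 0 := by
    intro h
    apply hv
    have h2 : v = (v ≫ e'.inv) ≫ e'.hom := by simp
    rw [h2, h, Limits.zero_comp]
  obtain ⟨c, hc⟩ := span1 eq hv' (x ≫ e'.inv)
  refine ⟨c, ?_⟩
  have h2 : x = (x ≫ e'.inv) ≫ e'.hom := by simp
  rw [h2, hc, Linear.smul_comp]
  simp

lemma basis2_span {M : Type*} [AddCommGroup M] [Module ℂ M] (B : Module.Basis (Fin 2) ℂ M) (x : M) :
    ∃ c d : ℂ, x = c • B 0 + d • B 1 := by
  refine ⟨B.repr x 0, B.repr x 1, ?_⟩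
  have h := B.sum_repr x
  rw [Fin.sum_univ_two] at h
  exact h.symm

lemma basis2_indep {M : Type*} [AddCommGroup M] [Module ℂ M] (B : Module.Basis (Fin 2) ℂ M) {c d : ℂ}
    (h : c • B 0 + d • B 1 = 0) : c = 0 ∧ d = 0 := by
  have hli := B.linearIndependent
  rw [Fintype.linearIndependent_iff] at hli
  have h2 := hli ![c, d] (by simpa [Fin.sum_univ_two] using h)
  exact ⟨h2 0, h2 1⟩

lemma nzHalf {A B Y : D} {ua vb : A ⟶ B} {gs : B ⟶ Y} {ws : Y ⟶ A⟦(1:ℤ)⟧}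
    (hTS : Triangle.mk (ua + vb) gs ws ∈ distTriang D)
    (Bb : Module.Basis (Fin 2) ℂ (A ⟶ B)) (hB0 : Bb 0 = ua) (hB1 : Bb 1 = vb)
    (hspan : ∀ z : A ⟶ A, ∃ c : ℂ, z = c • 𝟙 A) :
    vb ≫ gs ≠ 0 ∧ ua ≫ gs ≠ 0 := by
  have key : ∀ z : A ⟶ A, ∀ c : ℂ, z = c • 𝟙 A →
      z ≫ (ua + vb) = c • ua + c • vb := by
    intro z c hc
    rw [hc]
    simp [Linear.smul_comp, smul_add]
  constructor
  · intro h0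
    obtain ⟨z, hz⟩ := Triangle.coyoneda_exact₂ _ hTS vb h0
    obtain ⟨c, hc⟩ := hspan z
    have h1 : vb = c • ua + c • vb := hz.trans (key z c hc)
    have h2 : c • ua + (c - 1) • vb = 0 := by
      calc c • ua + (c - 1) • vb = (c • ua + c • vb) - vb := by rw [sub_smul, one_smul]; abel
      _ = 0 := by rw [← h1, sub_self]
    rw [← hB0, ← hB1] at h2
    obtain ⟨h3, h4⟩ := basis2_indep Bb h2
    rw [h3] at h4
    norm_num at h4
  · intro h0
    obtain ⟨z, hz⟩ := Triangle.coyoneda_exact₂ _ hTS ua h0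
    obtain ⟨c, hc⟩ := hspan z
    have h1 : ua = c • ua + c • vb := hz.trans (key z c hc)
    have h2 : (c - 1) • ua + c • vb = 0 := by
      calc (c - 1) • ua + c • vb = (c • ua + c • vb) - ua := by rw [sub_smul, one_smul]; abel
      _ = 0 := by rw [← h1, sub_self]
    rw [← hB0, ← hB1] at h2
    obtain ⟨h3, h4⟩ := basis2_indep Bb h2
    rw [h4] at h3
    norm_num at h3

/-! ### Mutation-type helpers -/


lemma mutInj {Y B K Q : D} {v : K ⟶ B} {ι : Q ⟶ K} {gY : B ⟶ Y}
    (hspan : ∀ x : B ⟶ Y, ∃ c : ℂ, x = c • gY)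
    (hne : (ι ≫ v) ≫ gY ≠ 0)
    {Z : D} (E : Z ≅ Y) (x : B ⟶ Z) (hx : v ≫ x = 0) : x = 0 := by
  obtain ⟨c, hc⟩ := hspan (x ≫ E.hom)
  rcases eq_or_ne c 0 with h0 | h0
  · have h1 : x ≫ E.hom = 0 := by rw [hc, h0, zero_smul]
    calc x = (x ≫ E.hom) ≫ E.inv := by simp
    _ = 0 := by rw [h1, Limits.zero_comp]
  · exfalso
    apply hne
    have h1 : v ≫ (x ≫ E.hom) = 0 := by rw [← Category.assoc, hx, Limits.zero_comp]
    rw [hc, Linear.comp_smul] at h1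
    have h2 : v ≫ gY = 0 := (smul_eq_zero.mp h1).resolve_left h0
    rw [Category.assoc, h2, Limits.comp_zero]

lemma mutFac {Y W M K B : D} {v' : W ⟶ M} {ι : M ⟶ K} {δ : K ⟶ W⟦(1:ℤ)⟧}
    (htri : Triangle.mk v' ι δ ∈ distTriang D)
    {v : K ⟶ B} {gY : B ⟶ Y}
    (hspan : ∀ x : M ⟶ Y, ∃ c : ℂ, x = c • (ι ≫ v ≫ gY))
    (hWvan : ∀ t : W ⟶ Y⟦(-1:ℤ)⟧, t = 0)
    {Z : D} (E : Z ≅ Y) (h : K ⟶ Z) : ∃ g : B ⟶ Z, h = v ≫ g := by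
  obtain ⟨c, hc⟩ := hspan (ι ≫ (h ≫ E.hom))
  have hrem : ι ≫ (h ≫ E.hom - v ≫ (c • gY)) = 0 := by
    rw [Preadditive.comp_sub, hc]
    have h2 : ι ≫ v ≫ (c • gY) = c • (ι ≫ v ≫ gY) := by
      rw [Linear.comp_smul, Linear.comp_smul]
    rw [h2, sub_self]
  obtain ⟨u, hu⟩ := Triangle.yoneda_exact₂ _ (rot_of_distTriang _ htri) _ hrem
  have hu0 : u = 0 := vSrc hWvan u
  have hEq : h ≫ E.hom = v ≫ (c • gY) := by
    rw [hu0, Limits.comp_zero] at hu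
    exact sub_eq_zero.mp hu
  refine ⟨(c • gY) ≫ E.inv, ?_⟩
  calc h = (h ≫ E.hom) ≫ E.inv := by simp
  _ = (v ≫ (c • gY)) ≫ E.inv := by rw [hEq]
  _ = v ≫ ((c • gY) ≫ E.inv) := by rw [Category.assoc]

lemma injOfId {A Bo : D} (Bb : Module.Basis (Fin 2) ℂ (A ⟶ Bo)) {u v : A ⟶ Bo}
    (hB0 : Bb 0 = u) (hB1 : Bb 1 = v)
    (hspan : ∀ z : A ⟶ A, ∃ c : ℂ, z = c • 𝟙 A)
    (x : A ⟶ A) (hx : x ≫ (u + v) = 0) : x = 0 := by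
  obtain ⟨c, hc⟩ := hspan x
  have h2 : c • u + c • v = 0 := by
    rw [hc] at hx
    simpa [Linear.smul_comp, Preadditive.comp_add, Category.id_comp, smul_add] using hx
  rw [← hB0, ← hB1] at h2
  obtain ⟨h3, _⟩ := basis2_indep Bb h2
  rw [hc, h3, zero_smul]

lemma injOfBasis {A Bo Co : D} (B1 : Module.Basis (Fin 2) ℂ (A ⟶ Bo)) (B2 : Module.Basis (Fin 2) ℂ (A ⟶ Co))
    {u v : A ⟶ Bo} (hB10 : B1 0 = u) (hB11 : B1 1 = v)
    {cc : Bo ⟶ Co} {u' v' : A ⟶ Co} (hB20 : B2 0 = u') (hB21 : B2 1 = v')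
    (hu : u ≫ cc = u') (hv : v ≫ cc = v')
    (x : A ⟶ Bo) (hx : x ≫ cc = 0) : x = 0 := by
  obtain ⟨c, d, hcd⟩ := basis2_span B1 x
  have h2 : c • u' + d • v' = 0 := by
    rw [hcd, hB10, hB11] at hx
    simpa [Preadditive.add_comp, Linear.smul_comp, hu, hv] using hx
  rw [← hB20, ← hB21] at h2
  obtain ⟨h3, h4⟩ := basis2_indep B2 h2
  rw [hcd, h3, h4, zero_smul, zero_smul, add_zero]

lemma surjOfBasis {A Bo Co : D} (B1 : Module.Basis (Fin 2) ℂ (A ⟶ Co))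
    {u' v' : A ⟶ Co} (hB10 : B1 0 = u') (hB11 : B1 1 = v')
    {cc : Bo ⟶ Co} {u v : A ⟶ Bo} (hu : u ≫ cc = u') (hv : v ≫ cc = v')
    (y : A ⟶ Co) : ∃ z : A ⟶ Bo, y = z ≫ cc := by
  obtain ⟨c, d, hcd⟩ := basis2_span B1 y
  refine ⟨c • u + d • v, ?_⟩
  rw [hcd, hB10, hB11, Preadditive.add_comp, Linear.smul_comp, Linear.smul_comp, hu, hv]

end Statement8Infra

section Statement8Setup

set_option linter.unusedSectionVars false
set_option maxHeartbeats 3200000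

open ZeroObject

variable {D : Type u} [Category.{v} D] [Preadditive D] [HasZeroObject D] [HasShift D ℤ]
  [∀ n : ℤ, (shiftFunctor D n).Additive] [Pretriangulated D] [Linear ℂ D]

lemma vP (St : Setup 4 D) (i j : ℕ) (h1 : 1 ≤ i) (h2 : i ≤ 4) (h3 : 1 ≤ j) (h4 : j ≤ 4)
    (p : ℤ) (hp : p ≠ 0 ∨ i < j) : ∀ f : St.P i ⟶ (St.P j)⟦p⟧, f = 0 := by
  intro f
  obtain ⟨e⟩ := St.hom_dims i j h1 h2 h3 h4 p
  have hc : (if p = 0 then (if i = j then 1 else if j < i then 2 else 0) else 0) = 0 := by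
    rcases hp with hp | hp
    · rw [if_neg hp]
    · by_cases hp0 : p = 0
      · rw [if_pos hp0, if_neg (by omega), if_neg (by omega)]
      · rw [if_neg hp0]
  have hc2 : (fun p : ℤ => if p = 0 then (if i = j then 1 else if j < i then 2 else 0) else 0) p
      = 0 := hc
  rw [hc2] at e
  exact vanish_of_e0 e f

lemma vP0 (St : Setup 4 D) (i j : ℕ) (h1 : 1 ≤ i) (h2 : i ≤ 4) (h3 : 1 ≤ j) (h4 : j ≤ 4)
    (hij : i < j) (x : St.P i ⟶ St.P j) : x = 0 :=
  vIso (s0Iso (St.P j)).symm (vP St i j h1 h2 h3 h4 0 (Or.inr hij)) x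

lemma idNe (St : Setup 4 D) (m : ℕ) (h1 : 1 ≤ m) (h4 : m ≤ 4) : 𝟙 (St.P m) ≠ 0 := by
  interval_cases m
  · obtain ⟨B, _, _⟩ := St.hom_basis 1 1 (by norm_num) (by norm_num) (by norm_num)
    intro h
    exact B.ne_zero 0 (by rw [← Category.comp_id (B 0), h, Limits.comp_zero])
  · obtain ⟨B, _, _⟩ := St.hom_basis 2 1 (by norm_num) (by norm_num) (by norm_num)
    intro h
    exact B.ne_zero 0 (by rw [← Category.comp_id (B 0), h, Limits.comp_zero])
  · obtain ⟨B, _, _⟩ := St.hom_basis 3 1 (by norm_num) (by norm_num) (by norm_num)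
    intro h
    exact B.ne_zero 0 (by rw [← Category.comp_id (B 0), h, Limits.comp_zero])
  · obtain ⟨B, _, _⟩ := St.hom_basis 3 1 (by norm_num) (by norm_num) (by norm_num)
    intro h
    have h' : 𝟙 (St.P (3+1)) = 0 := h
    exact B.ne_zero 0 (by rw [← Category.id_comp (B 0), h', Limits.zero_comp])

lemma espanS (St : Setup 4 D) (m : ℕ) (h1 : 1 ≤ m) (h4 : m ≤ 4) (x : St.P m ⟶ St.P m) :
    ∃ c : ℂ, x = c • 𝟙 (St.P m) := by
  obtain ⟨e⟩ := St.hom_dims m m h1 h4 h1 h4 0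
  have hc : (if (0:ℤ) = 0 then (if m = m then 1 else if m < m then 2 else 0) else 0) = 1 := by
    rw [if_pos rfl, if_pos rfl]
  have hc2 : (fun p : ℤ => if p = 0 then (if m = m then 1 else if m < m then 2 else 0) else 0)
      (0:ℤ) = 1 := hc
  rw [hc2] at e
  exact span1_of_iso (s0Iso (St.P m)) e (idNe St m h1 h4) x

lemma leafS (St : Setup 4 D) {s : ℕ} (hs1 : 1 ≤ s) (hs3 : s ≤ 3) {Y : D}
    {gs : St.P s ⟶ Y} {ws : Y ⟶ (St.P (s+1))⟦(1:ℤ)⟧}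
    (hTS : Triangle.mk (St.a s + St.b s) gs ws ∈ distTriang D)
    {m : ℕ} (hm1 : 1 ≤ m) (hm4 : m ≤ 4)
    (hinj0 : ∀ x : St.P m ⟶ St.P (s+1), x ≫ (St.a s + St.b s) = 0 → x = 0)
    (q : ℤ)
    (hq : q ≠ 0 ∨ ∀ y : St.P m ⟶ St.P s, ∃ z : St.P m ⟶ St.P (s+1), y = z ≫ (St.a s + St.b s))
    (f : St.P m ⟶ Y⟦q⟧) : f = 0 := by
  by_cases hq0 : q = 0
  · subst hq0
    rcases hq with h | hsurj
    · exact absurd rfl h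
    · refine vIso (s0Iso Y) ?_ f
      intro f'
      exact covCoker hTS (St.P m)
        (vP St m (s+1) hm1 hm4 (by omega) (by omega) 1 (Or.inl one_ne_zero)) hsurj f'
  · by_cases hqm : q = -1
    · subst hqm
      exact covKer hTS (St.P m)
        (vP St m s hm1 hm4 hs1 (by omega) (-1) (Or.inl (by norm_num))) hinj0 f
    · exact covThird hTS (St.P m) q
        (vP St m s hm1 hm4 hs1 (by omega) q (Or.inl hq0))
        (vP St m (s+1) hm1 hm4 (by omega) (by omega) (q+1) (Or.inl (by omega))) f

/-- The `a ↔ b` swapped presentation. -/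
noncomputable def swapSetup (St : Setup 4 D) : Setup 4 D where
  P := St.P
  a := St.b
  b := St.a
  rel_ab := St.rel_ba
  rel_ba := St.rel_ab
  hom_dims := St.hom_dims
  hom_basis := by
    intro j k hj hk hjk
    obtain ⟨B, h0, h1⟩ := St.hom_basis j k hj hk hjk
    refine ⟨B.reindex (Equiv.swap 0 1), ?_, ?_⟩
    · rw [Module.Basis.reindex_apply]
      simpa using h1
    · rw [Module.Basis.reindex_apply]
      simpa using h0
  full := St.full

end Statement8Setup

section Statement8G1

set_option linter.unusedSectionVars false
set_option maxHeartbeats 3200000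

open ZeroObject

variable {D : Type u} [Category.{v} D] [Preadditive D] [HasZeroObject D] [HasShift D ℤ]
  [∀ n : ℤ, (shiftFunctor D n).Additive] [Pretriangulated D] [Linear ℂ D]

lemma G1 (St : Setup 4 D) {Sp : D}
    (TD : TotData (St.P 4) (St.P 3) (St.P 2) (St.P 1) Sp (St.b 3) (St.a 2) (St.b 1))
    {s : ℕ} (hs1 : 1 ≤ s) (hs3 : s ≤ 3) {Y : D} {gs : St.P s ⟶ Y}
    {ws : Y ⟶ (St.P (s+1))⟦(1:ℤ)⟧}
    (hTS : Triangle.mk (St.a s + St.b s) gs ws ∈ distTriang D)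
    (p : ℤ) (f : Sp ⟶ Y⟦p⟧) : f = 0 := by
  -- bases and basic facts
  obtain ⟨B21, e21a, e21b⟩ := St.hom_basis 1 1 (by norm_num) (by norm_num) (by norm_num)
  obtain ⟨B32, e32a, e32b⟩ := St.hom_basis 2 1 (by norm_num) (by norm_num) (by norm_num)
  obtain ⟨B43, e43a, e43b⟩ := St.hom_basis 3 1 (by norm_num) (by norm_num) (by norm_num)
  obtain ⟨B31, e31a, e31b⟩ := St.hom_basis 1 2 (by norm_num) (by norm_num) (by norm_num)
  obtain ⟨B42, e42a, e42b⟩ := St.hom_basis 2 2 (by norm_num) (by norm_num) (by norm_num)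
  obtain ⟨B41, e41a, e41b⟩ := St.hom_basis 1 3 (by norm_num) (by norm_num) (by norm_num)
  have hB21a : B21 0 = St.a 1 := by rw [e21a]; exact Category.comp_id _
  have hB21b : B21 1 = St.b 1 := by rw [e21b]; exact Category.comp_id _
  have hB32a : B32 0 = St.a 2 := by rw [e32a]; exact Category.comp_id _
  have hB32b : B32 1 = St.b 2 := by rw [e32b]; exact Category.comp_id _
  have hB43a : B43 0 = St.a 3 := by rw [e43a]; exact Category.comp_id _
  have hB43b : B43 1 = St.b 3 := by rw [e43b]; exact Category.comp_id _
  have hB31a : B31 0 = St.a 2 ≫ St.a 1 := by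
    rw [e31a]; show St.a 2 ≫ St.a 1 ≫ 𝟙 _ = _; rw [Category.comp_id]
  have hB31b : B31 1 = St.b 2 ≫ St.b 1 := by
    rw [e31b]; show St.b 2 ≫ St.b 1 ≫ 𝟙 _ = _; rw [Category.comp_id]
  have hB42a : B42 0 = St.a 3 ≫ St.a 2 := by
    rw [e42a]; show St.a 3 ≫ St.a 2 ≫ 𝟙 _ = _; rw [Category.comp_id]
  have hB42b : B42 1 = St.b 3 ≫ St.b 2 := by
    rw [e42b]; show St.b 3 ≫ St.b 2 ≫ 𝟙 _ = _; rw [Category.comp_id]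
  have hB41a : B41 0 = St.a 3 ≫ St.a 2 ≫ St.a 1 := by
    rw [e41a]; show St.a 3 ≫ St.a 2 ≫ St.a 1 ≫ 𝟙 _ = _; rw [Category.comp_id]
  have hB41b : B41 1 = St.b 3 ≫ St.b 2 ≫ St.b 1 := by
    rw [e41b]; show St.b 3 ≫ St.b 2 ≫ St.b 1 ≫ 𝟙 _ = _; rw [Category.comp_id]
  have a2ne : St.a 2 ≠ 0 := hB32a ▸ B32.ne_zero 0
  have b3ne : St.b 3 ≠ 0 := hB43b ▸ B43.ne_zero 1
  interval_cases s
  -- ============================ s = 1 ============================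
  · -- Y is the cone of a1 + b1 : P2 ⟶ P1
    have inj1 : ∀ x : St.P 1 ⟶ St.P 2, x ≫ (St.a 1 + St.b 1) = 0 → x = 0 :=
      fun x _ => vP0 St 1 2 (by norm_num) (by norm_num) (by norm_num) (by norm_num) (by norm_num) x
    have inj2 : ∀ x : St.P 2 ⟶ St.P 2, x ≫ (St.a 1 + St.b 1) = 0 → x = 0 :=
      injOfId B21 hB21a hB21b (espanS St 2 (by norm_num) (by norm_num))
    have pr_a2a1 : St.a 2 ≫ (St.a 1 + St.b 1) = St.a 2 ≫ St.a 1 := by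
      rw [Preadditive.comp_add, St.rel_ab 1, add_zero]
    have pr_b2b1 : St.b 2 ≫ (St.a 1 + St.b 1) = St.b 2 ≫ St.b 1 := by
      rw [Preadditive.comp_add, St.rel_ba 1, zero_add]
    have pr_aa : (St.a 3 ≫ St.a 2) ≫ (St.a 1 + St.b 1) = St.a 3 ≫ St.a 2 ≫ St.a 1 := by
      rw [Category.assoc, Preadditive.comp_add, St.rel_ab 1, Preadditive.comp_add,
        Limits.comp_zero, add_zero]
    have pr_bb : (St.b 3 ≫ St.b 2) ≫ (St.a 1 + St.b 1) = St.b 3 ≫ St.b 2 ≫ St.b 1 := by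
      rw [Category.assoc, Preadditive.comp_add, St.rel_ba 1, Preadditive.comp_add,
        Limits.comp_zero, zero_add]
    have inj3 : ∀ x : St.P 3 ⟶ St.P 2, x ≫ (St.a 1 + St.b 1) = 0 → x = 0 :=
      injOfBasis B32 B31 hB32a hB32b hB31a hB31b pr_a2a1 pr_b2b1
    have inj4 : ∀ x : St.P 4 ⟶ St.P 2, x ≫ (St.a 1 + St.b 1) = 0 → x = 0 :=
      injOfBasis B42 B41 hB42a hB42b hB41a hB41b pr_aa pr_bb
    have surj3 : ∀ y : St.P 3 ⟶ St.P 1, ∃ z : St.P 3 ⟶ St.P 2, y = z ≫ (St.a 1 + St.b 1) :=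
      surjOfBasis B31 hB31a hB31b pr_a2a1 pr_b2b1
    have surj4 : ∀ y : St.P 4 ⟶ St.P 1, ∃ z : St.P 4 ⟶ St.P 2, y = z ≫ (St.a 1 + St.b 1) :=
      surjOfBasis B41 hB41a hB41b pr_aa pr_bb
    have leaf1 : ∀ (q : ℤ), q ≠ 0 → ∀ (f' : St.P 1 ⟶ Y⟦q⟧), f' = 0 :=
      fun q hq => leafS St (by norm_num) (by norm_num) hTS (by norm_num) (by norm_num)
        inj1 q (Or.inl hq)
    have leaf2 : ∀ (q : ℤ), q ≠ 0 → ∀ (f' : St.P 2 ⟶ Y⟦q⟧), f' = 0 :=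
      fun q hq => leafS St (by norm_num) (by norm_num) hTS (by norm_num) (by norm_num)
        inj2 q (Or.inl hq)
    have leaf3 : ∀ (q : ℤ) (f' : St.P 3 ⟶ Y⟦q⟧), f' = 0 :=
      fun q => leafS St (by norm_num) (by norm_num) hTS (by norm_num) (by norm_num)
        inj3 q (Or.inr surj3)
    have leaf4 : ∀ (q : ℤ) (f' : St.P 4 ⟶ Y⟦q⟧), f' = 0 :=
      fun q => leafS St (by norm_num) (by norm_num) hTS (by norm_num) (by norm_num)
        inj4 q (Or.inr surj4)
    have vK1 : ∀ (r : ℤ) (Z : D) (E : Z ≅ Y⟦r⟧) (t : TD.K₁ ⟶ Z), t = 0 := by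
      intro r Z E t
      exact coneVanish TD.tri₁ (fun x _ => vIso E (leaf3 r) x)
        (fun h₀ => ⟨0, by rw [Limits.comp_zero]; exact vIso (downIso E) (leaf4 (r-1)) h₀⟩) t
    have vK2 : ∀ (q : ℤ), q ≠ 0 → ∀ (Z : D) (E : Z ≅ Y⟦q⟧) (t : TD.K₂ ⟶ Z), t = 0 := by
      intro q hq Z E t
      exact coneVanish TD.tri₂ (fun x _ => vIso E (leaf2 q hq) x)
        (fun h₀ => ⟨0, by rw [Limits.comp_zero]; exact vK1 (q-1) _ (downIso E) h₀⟩) t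
    -- structure of Hom(−, Y)
    have hcomp : (St.a 1 + St.b 1) ≫ gs = 0 := comp_distTriang_mor_zero₁₂ _ hTS
    have hrel : St.a 1 ≫ gs = -(St.b 1 ≫ gs) := by
      rw [Preadditive.add_comp] at hcomp
      exact eq_neg_of_add_eq_zero_left hcomp
    have nzb1 : St.b 1 ≫ gs ≠ 0 :=
      (nzHalf hTS B21 hB21a hB21b (espanS St 2 (by norm_num) (by norm_num))).1
    have span1Y : ∀ x : St.P 1 ⟶ Y, ∃ c : ℂ, x = c • gs := by
      intro x
      obtain ⟨y, hy⟩ := coyMk₃ hTS x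
        (vP St 1 2 (by norm_num) (by norm_num) (by norm_num) (by norm_num) 1
          (Or.inl one_ne_zero) _)
      obtain ⟨c, hc⟩ := espanS St 1 (by norm_num) (by norm_num) y
      exact ⟨c, by rw [hy, hc, Linear.smul_comp, Category.id_comp]⟩
    have span2Y : ∀ x : St.P 2 ⟶ Y, ∃ c : ℂ, x = c • (TD.ι₂ ≫ TD.v₂ ≫ gs) := by
      intro x
      obtain ⟨y, hy⟩ := coyMk₃ hTS x
        (vP St 2 2 (by norm_num) (by norm_num) (by norm_num) (by norm_num) 1
          (Or.inl one_ne_zero) _)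
      obtain ⟨c, d, hcd⟩ := basis2_span B21 y
      refine ⟨d - c, ?_⟩
      have hb1 : St.b 1 ≫ gs = TD.ι₂ ≫ TD.v₂ ≫ gs := by rw [← Category.assoc, TD.fac₂]
      rw [hy, hcd, hB21a, hB21b, Preadditive.add_comp, Linear.smul_comp, Linear.smul_comp,
        hrel, hb1]
      module
    refine coneVanish TD.tri₃ ?_ ?_ f
    · by_cases hp : p = 0
      · subst hp
        intro x hx
        exact mutInj span1Y (by rw [TD.fac₂]; exact nzb1) (s0Iso Y) x hx
      · exact fun x _ => leaf1 p hp x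
    · by_cases hp : p = 1
      · subst hp
        intro h₀
        have E' : (((Y⟦(1:ℤ)⟧)⟦(-1:ℤ)⟧ : D) ≅ Y) := sIso Y 1 (-1) 0 (by ring) ≪≫ s0Iso Y
        exact mutFac TD.tri₂ span2Y (fun t => vK1 (-1) _ (Iso.refl _) t) E' h₀
      · intro h₀
        refine ⟨0, ?_⟩
        rw [Limits.comp_zero]
        exact vK2 (p-1) (by omega) _ (downIso (Iso.refl (Y⟦p⟧))) h₀
  -- ============================ s = 2 ============================
  · -- Y is the cone of a2 + b2 : P3 ⟶ P2
    have inj1 : ∀ x : St.P 1 ⟶ St.P 3, x ≫ (St.a 2 + St.b 2) = 0 → x = 0 :=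
      fun x _ => vP0 St 1 3 (by norm_num) (by norm_num) (by norm_num) (by norm_num) (by norm_num) x
    have inj2 : ∀ x : St.P 2 ⟶ St.P 3, x ≫ (St.a 2 + St.b 2) = 0 → x = 0 :=
      fun x _ => vP0 St 2 3 (by norm_num) (by norm_num) (by norm_num) (by norm_num) (by norm_num) x
    have inj3 : ∀ x : St.P 3 ⟶ St.P 3, x ≫ (St.a 2 + St.b 2) = 0 → x = 0 :=
      injOfId B32 hB32a hB32b (espanS St 3 (by norm_num) (by norm_num))
    have pr_a3 : St.a 3 ≫ (St.a 2 + St.b 2) = St.a 3 ≫ St.a 2 := by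
      rw [Preadditive.comp_add, St.rel_ab 2, add_zero]
    have pr_b3 : St.b 3 ≫ (St.a 2 + St.b 2) = St.b 3 ≫ St.b 2 := by
      rw [Preadditive.comp_add, St.rel_ba 2, zero_add]
    have inj4 : ∀ x : St.P 4 ⟶ St.P 3, x ≫ (St.a 2 + St.b 2) = 0 → x = 0 :=
      injOfBasis B43 B42 hB43a hB43b hB42a hB42b pr_a3 pr_b3
    have surj1 : ∀ y : St.P 1 ⟶ St.P 2, ∃ z : St.P 1 ⟶ St.P 3, y = z ≫ (St.a 2 + St.b 2) := by
      intro y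
      refine ⟨0, ?_⟩
      rw [Limits.zero_comp]
      exact vP0 St 1 2 (by norm_num) (by norm_num) (by norm_num) (by norm_num) (by norm_num) y
    have surj4 : ∀ y : St.P 4 ⟶ St.P 2, ∃ z : St.P 4 ⟶ St.P 3, y = z ≫ (St.a 2 + St.b 2) :=
      surjOfBasis B42 hB42a hB42b pr_a3 pr_b3
    have leaf1 : ∀ (q : ℤ) (f' : St.P 1 ⟶ Y⟦q⟧), f' = 0 :=
      fun q => leafS St (by norm_num) (by norm_num) hTS (by norm_num) (by norm_num)
        inj1 q (Or.inr surj1)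
    have leaf2 : ∀ (q : ℤ), q ≠ 0 → ∀ (f' : St.P 2 ⟶ Y⟦q⟧), f' = 0 :=
      fun q hq => leafS St (by norm_num) (by norm_num) hTS (by norm_num) (by norm_num)
        inj2 q (Or.inl hq)
    have leaf3 : ∀ (q : ℤ), q ≠ 0 → ∀ (f' : St.P 3 ⟶ Y⟦q⟧), f' = 0 :=
      fun q hq => leafS St (by norm_num) (by norm_num) hTS (by norm_num) (by norm_num)
        inj3 q (Or.inl hq)
    have leaf4 : ∀ (q : ℤ) (f' : St.P 4 ⟶ Y⟦q⟧), f' = 0 :=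
      fun q => leafS St (by norm_num) (by norm_num) hTS (by norm_num) (by norm_num)
        inj4 q (Or.inr surj4)
    have vK1ne : ∀ (r : ℤ), r ≠ 0 → ∀ (Z : D) (E : Z ≅ Y⟦r⟧) (t : TD.K₁ ⟶ Z), t = 0 := by
      intro r hr Z E t
      exact coneVanish TD.tri₁ (fun x _ => vIso E (leaf3 r hr) x)
        (fun h₀ => ⟨0, by rw [Limits.comp_zero]; exact vIso (downIso E) (leaf4 (r-1)) h₀⟩) t
    have hcomp : (St.a 2 + St.b 2) ≫ gs = 0 := comp_distTriang_mor_zero₁₂ _ hTS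
    have hrelb : St.b 2 ≫ gs = -(St.a 2 ≫ gs) := by
      rw [Preadditive.add_comp] at hcomp
      exact eq_neg_of_add_eq_zero_right hcomp
    have nza2 : St.a 2 ≫ gs ≠ 0 :=
      (nzHalf hTS B32 hB32a hB32b (espanS St 3 (by norm_num) (by norm_num))).2
    have span2Y : ∀ x : St.P 2 ⟶ Y, ∃ c : ℂ, x = c • gs := by
      intro x
      obtain ⟨y, hy⟩ := coyMk₃ hTS x
        (vP St 2 3 (by norm_num) (by norm_num) (by norm_num) (by norm_num) 1
          (Or.inl one_ne_zero) _)
      obtain ⟨c, hc⟩ := espanS St 2 (by norm_num) (by norm_num) y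
      exact ⟨c, by rw [hy, hc, Linear.smul_comp, Category.id_comp]⟩
    have span3Y : ∀ x : St.P 3 ⟶ Y, ∃ c : ℂ, x = c • (TD.ι₁ ≫ TD.v₁ ≫ gs) := by
      intro x
      obtain ⟨y, hy⟩ := coyMk₃ hTS x
        (vP St 3 3 (by norm_num) (by norm_num) (by norm_num) (by norm_num) 1
          (Or.inl one_ne_zero) _)
      obtain ⟨c, d, hcd⟩ := basis2_span B32 y
      refine ⟨c - d, ?_⟩
      have ha2 : St.a 2 ≫ gs = TD.ι₁ ≫ TD.v₁ ≫ gs := by rw [← Category.assoc, TD.fac₁]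
      rw [hy, hcd, hB32a, hB32b, Preadditive.add_comp, Linear.smul_comp, Linear.smul_comp,
        hrelb, ha2]
      module
    have vK2 : ∀ (q : ℤ) (Z : D) (E : Z ≅ Y⟦q⟧) (t : TD.K₂ ⟶ Z), t = 0 := by
      intro q Z E t
      refine coneVanish TD.tri₂ ?_ ?_ t
      · by_cases hq : q = 0
        · subst hq
          intro x hx
          exact mutInj span2Y (by rw [TD.fac₁]; exact nza2) (E ≪≫ s0Iso Y) x hx
        · exact fun x _ => vIso E (leaf2 q hq) x
      · by_cases hq : q = 1
        · subst hq
          intro h₀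
          have E' : ((Z⟦(-1:ℤ)⟧ : D) ≅ Y) :=
            (shiftFunctor D (-1:ℤ)).mapIso E ≪≫ sIso Y 1 (-1) 0 (by ring) ≪≫ s0Iso Y
          exact mutFac TD.tri₁ span3Y (fun t' => vIso (Iso.refl _) (leaf4 (-1)) t') E' h₀
        · intro h₀
          refine ⟨0, ?_⟩
          rw [Limits.comp_zero]
          exact vK1ne (q-1) (by omega) _ (downIso E) h₀
    refine coneVanish TD.tri₃ (fun x _ => leaf1 p x)
      (fun h₀ => ⟨0, ?_⟩) f
    rw [Limits.comp_zero]
    exact vK2 (p-1) _ (downIso (Iso.refl (Y⟦p⟧))) h₀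
  -- ============================ s = 3 ============================
  · -- Y is the cone of a3 + b3 : P4 ⟶ P3
    have inj1 : ∀ x : St.P 1 ⟶ St.P 4, x ≫ (St.a 3 + St.b 3) = 0 → x = 0 :=
      fun x _ => vP0 St 1 4 (by norm_num) (by norm_num) (by norm_num) (by norm_num) (by norm_num) x
    have inj2 : ∀ x : St.P 2 ⟶ St.P 4, x ≫ (St.a 3 + St.b 3) = 0 → x = 0 :=
      fun x _ => vP0 St 2 4 (by norm_num) (by norm_num) (by norm_num) (by norm_num) (by norm_num) x
    have inj3 : ∀ x : St.P 3 ⟶ St.P 4, x ≫ (St.a 3 + St.b 3) = 0 → x = 0 :=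
      fun x _ => vP0 St 3 4 (by norm_num) (by norm_num) (by norm_num) (by norm_num) (by norm_num) x
    have inj4 : ∀ x : St.P 4 ⟶ St.P 4, x ≫ (St.a 3 + St.b 3) = 0 → x = 0 :=
      injOfId B43 hB43a hB43b (espanS St 4 (by norm_num) (by norm_num))
    have surj1 : ∀ y : St.P 1 ⟶ St.P 3, ∃ z : St.P 1 ⟶ St.P 4, y = z ≫ (St.a 3 + St.b 3) := by
      intro y
      refine ⟨0, ?_⟩
      rw [Limits.zero_comp]
      exact vP0 St 1 3 (by norm_num) (by norm_num) (by norm_num) (by norm_num) (by norm_num) y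
    have surj2 : ∀ y : St.P 2 ⟶ St.P 3, ∃ z : St.P 2 ⟶ St.P 4, y = z ≫ (St.a 3 + St.b 3) := by
      intro y
      refine ⟨0, ?_⟩
      rw [Limits.zero_comp]
      exact vP0 St 2 3 (by norm_num) (by norm_num) (by norm_num) (by norm_num) (by norm_num) y
    have leaf1 : ∀ (q : ℤ) (f' : St.P 1 ⟶ Y⟦q⟧), f' = 0 :=
      fun q => leafS St (by norm_num) (by norm_num) hTS (by norm_num) (by norm_num)
        inj1 q (Or.inr surj1)
    have leaf2 : ∀ (q : ℤ) (f' : St.P 2 ⟶ Y⟦q⟧), f' = 0 :=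
      fun q => leafS St (by norm_num) (by norm_num) hTS (by norm_num) (by norm_num)
        inj2 q (Or.inr surj2)
    have leaf3 : ∀ (q : ℤ), q ≠ 0 → ∀ (f' : St.P 3 ⟶ Y⟦q⟧), f' = 0 :=
      fun q hq => leafS St (by norm_num) (by norm_num) hTS (by norm_num) (by norm_num)
        inj3 q (Or.inl hq)
    have leaf4 : ∀ (q : ℤ), q ≠ 0 → ∀ (f' : St.P 4 ⟶ Y⟦q⟧), f' = 0 :=
      fun q hq => leafS St (by norm_num) (by norm_num) hTS (by norm_num) (by norm_num)
        inj4 q (Or.inl hq)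
    have hcomp : (St.a 3 + St.b 3) ≫ gs = 0 := comp_distTriang_mor_zero₁₂ _ hTS
    have hrel : St.a 3 ≫ gs = -(St.b 3 ≫ gs) := by
      rw [Preadditive.add_comp] at hcomp
      exact eq_neg_of_add_eq_zero_left hcomp
    have nzb3 : St.b 3 ≫ gs ≠ 0 :=
      (nzHalf hTS B43 hB43a hB43b (espanS St 4 (by norm_num) (by norm_num))).1
    have span3Y : ∀ x : St.P 3 ⟶ Y, ∃ c : ℂ, x = c • gs := by
      intro x
      obtain ⟨y, hy⟩ := coyMk₃ hTS x
        (vP St 3 4 (by norm_num) (by norm_num) (by norm_num) (by norm_num) 1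
          (Or.inl one_ne_zero) _)
      obtain ⟨c, hc⟩ := espanS St 3 (by norm_num) (by norm_num) y
      exact ⟨c, by rw [hy, hc, Linear.smul_comp, Category.id_comp]⟩
    have span4Y : ∀ x : St.P 4 ⟶ Y, ∃ c : ℂ, x = c • (𝟙 (St.P 4) ≫ St.b 3 ≫ gs) := by
      intro x
      obtain ⟨y, hy⟩ := coyMk₃ hTS x
        (vP St 4 4 (by norm_num) (by norm_num) (by norm_num) (by norm_num) 1
          (Or.inl one_ne_zero) _)
      obtain ⟨c, d, hcd⟩ := basis2_span B43 y
      refine ⟨d - c, ?_⟩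
      rw [hy, hcd, hB43a, hB43b, Preadditive.add_comp, Linear.smul_comp, Linear.smul_comp,
        hrel, Category.id_comp]
      module
    have vK1 : ∀ (r : ℤ) (Z : D) (E : Z ≅ Y⟦r⟧) (t : TD.K₁ ⟶ Z), t = 0 := by
      intro r Z E t
      refine coneVanish TD.tri₁ ?_ ?_ t
      · by_cases hr : r = 0
        · subst hr
          intro x hx
          refine mutInj (ι := 𝟙 (St.P 4)) span3Y ?_ (E ≪≫ s0Iso Y) x hx
          rw [Category.id_comp]
          exact nzb3
        · exact fun x _ => vIso E (leaf3 r hr) x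
      · by_cases hr : r = 1
        · subst hr
          intro h₀
          have E' : ((Z⟦(-1:ℤ)⟧ : D) ≅ Y) :=
            (shiftFunctor D (-1:ℤ)).mapIso E ≪≫ sIso Y 1 (-1) 0 (by ring) ≪≫ s0Iso Y
          exact mutFac (contractible_distinguished₁ (St.P 4)) span4Y
            (fun t' => (Limits.isZero_zero D).eq_of_src t' 0) E' h₀
        · intro h₀
          refine ⟨0, ?_⟩
          rw [Limits.comp_zero]
          exact vIso (downIso E) (leaf4 (r-1) (by omega)) h₀
    have vK2 : ∀ (q : ℤ) (Z : D) (E : Z ≅ Y⟦q⟧) (t : TD.K₂ ⟶ Z), t = 0 := by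
      intro q Z E t
      exact coneVanish TD.tri₂ (fun x _ => vIso E (leaf2 q) x)
        (fun h₀ => ⟨0, by rw [Limits.comp_zero]; exact vK1 (q-1) _ (downIso E) h₀⟩) t
    refine coneVanish TD.tri₃ (fun x _ => leaf1 p x) (fun h₀ => ⟨0, ?_⟩) f
    rw [Limits.comp_zero]
    exact vK2 (p-1) _ (downIso (Iso.refl (Y⟦p⟧))) h₀

end Statement8G1

section Statement8G3

set_option linter.unusedSectionVars false
set_option maxHeartbeats 3200000

open ZeroObject

variable {D : Type u} [Category.{v} D] [Preadditive D] [HasZeroObject D] [HasShift D ℤ]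
  [∀ n : ℤ, (shiftFunctor D n).Additive] [Pretriangulated D] [Linear ℂ D]

lemma G3 (St : Setup 4 D) {Sp Sm : D}
    (TDp : TotData (St.P 4) (St.P 3) (St.P 2) (St.P 1) Sp (St.b 3) (St.a 2) (St.b 1))
    (TDm : TotData (St.P 4) (St.P 3) (St.P 2) (St.P 1) Sm (St.a 3) (St.b 2) (St.a 1))
    (p : ℤ) (f : Sp ⟶ Sm⟦p⟧) : f = 0 := by
  obtain ⟨B21, e21a, e21b⟩ := St.hom_basis 1 1 (by norm_num) (by norm_num) (by norm_num)
  obtain ⟨B32, e32a, e32b⟩ := St.hom_basis 2 1 (by norm_num) (by norm_num) (by norm_num)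
  obtain ⟨B43, e43a, e43b⟩ := St.hom_basis 3 1 (by norm_num) (by norm_num) (by norm_num)
  obtain ⟨B31, e31a, e31b⟩ := St.hom_basis 1 2 (by norm_num) (by norm_num) (by norm_num)
  obtain ⟨B42, e42a, e42b⟩ := St.hom_basis 2 2 (by norm_num) (by norm_num) (by norm_num)
  obtain ⟨B41, e41a, e41b⟩ := St.hom_basis 1 3 (by norm_num) (by norm_num) (by norm_num)
  have hB21a : B21 0 = St.a 1 := by rw [e21a]; exact Category.comp_id _
  have hB21b : B21 1 = St.b 1 := by rw [e21b]; exact Category.comp_id _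
  have hB32a : B32 0 = St.a 2 := by rw [e32a]; exact Category.comp_id _
  have hB32b : B32 1 = St.b 2 := by rw [e32b]; exact Category.comp_id _
  have hB43a : B43 0 = St.a 3 := by rw [e43a]; exact Category.comp_id _
  have hB43b : B43 1 = St.b 3 := by rw [e43b]; exact Category.comp_id _
  have hB31a : B31 0 = St.a 2 ≫ St.a 1 := by
    rw [e31a]; show St.a 2 ≫ St.a 1 ≫ 𝟙 _ = _; rw [Category.comp_id]
  have hB31b : B31 1 = St.b 2 ≫ St.b 1 := by
    rw [e31b]; show St.b 2 ≫ St.b 1 ≫ 𝟙 _ = _; rw [Category.comp_id]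
  have hB42a : B42 0 = St.a 3 ≫ St.a 2 := by
    rw [e42a]; show St.a 3 ≫ St.a 2 ≫ 𝟙 _ = _; rw [Category.comp_id]
  have hB42b : B42 1 = St.b 3 ≫ St.b 2 := by
    rw [e42b]; show St.b 3 ≫ St.b 2 ≫ 𝟙 _ = _; rw [Category.comp_id]
  have hB41a : B41 0 = St.a 3 ≫ St.a 2 ≫ St.a 1 := by
    rw [e41a]; show St.a 3 ≫ St.a 2 ≫ St.a 1 ≫ 𝟙 _ = _; rw [Category.comp_id]
  have hB41b : B41 1 = St.b 3 ≫ St.b 2 ≫ St.b 1 := by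
    rw [e41b]; show St.b 3 ≫ St.b 2 ≫ St.b 1 ≫ 𝟙 _ = _; rw [Category.comp_id]
  have a1ne : St.a 1 ≠ 0 := hB21a ▸ B21.ne_zero 0
  have a3ne : St.a 3 ≠ 0 := hB43a ▸ B43.ne_zero 0
  have b2ne : St.b 2 ≠ 0 := hB32b ▸ B32.ne_zero 1
  have aane : St.a 2 ≫ St.a 1 ≠ 0 := hB31a ▸ B31.ne_zero 0
  have bbne : St.b 3 ≫ St.b 2 ≠ 0 := hB42b ▸ B42.ne_zero 1
  have aaane : St.a 3 ≫ St.a 2 ≫ St.a 1 ≠ 0 := hB41a ▸ B41.ne_zero 0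
  -- ==== covariant analysis of the Sm side ====
  -- K₁m
  have vK1mAll : ∀ (k : ℕ), 1 ≤ k → k ≤ 4 → ∀ (q : ℤ), q ≠ 0 →
      ∀ t : St.P k ⟶ TDm.K₁⟦q⟧, t = 0 := by
    intro k hk1 hk4 q hq
    by_cases hqm : q = -1
    · subst hqm
      refine covKer TDm.tri₁ (St.P k)
        (vP St k 3 hk1 hk4 (by norm_num) (by norm_num) (-1) (Or.inl (by norm_num))) ?_
      intro x hx
      change St.P k ⟶ St.P 4 at x
      change x ≫ St.a 3 = 0 at hx
      change x = (0 : St.P k ⟶ St.P 4)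
      by_cases hk : k = 4
      · subst hk
        obtain ⟨c, hc⟩ := espanS St 4 (by norm_num) (by norm_num) x
        have hx2 : c • St.a 3 = 0 := by
          rw [hc, Linear.smul_comp, Category.id_comp] at hx
          exact hx
        rcases smul_eq_zero.mp hx2 with h | h
        · rw [hc, h, zero_smul]
        · exact absurd h a3ne
      · exact vP0 St k 4 hk1 (by omega) (by norm_num) (by norm_num) (by omega) x
    · exact covThird TDm.tri₁ (St.P k) q
        (vP St k 3 hk1 hk4 (by norm_num) (by norm_num) q (Or.inl hq))
        (vP St k 4 hk1 hk4 (by norm_num) (by norm_num) (q+1) (Or.inl (by omega)))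
  have spanK1m3 : ∀ x : St.P 3 ⟶ TDm.K₁, ∃ c : ℂ, x = c • TDm.ι₁ := by
    intro x
    obtain ⟨y, hy⟩ := coyMk₃ TDm.tri₁ x
      (vP St 3 4 (by norm_num) (by norm_num) (by norm_num) (by norm_num) 1
        (Or.inl one_ne_zero) _)
    obtain ⟨c, hc⟩ := espanS St 3 (by norm_num) (by norm_num) y
    exact ⟨c, by rw [hy, hc, Linear.smul_comp, Category.id_comp]⟩
  have ha3i : St.a 3 ≫ TDm.ι₁ = 0 := comp_distTriang_mor_zero₁₂ _ TDm.tri₁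
  have spanK1m4 : ∀ x : St.P 4 ⟶ TDm.K₁, ∃ c : ℂ, x = c • (St.b 3 ≫ TDm.ι₁) := by
    intro x
    obtain ⟨y, hy⟩ := coyMk₃ TDm.tri₁ x
      (vP St 4 4 (by norm_num) (by norm_num) (by norm_num) (by norm_num) 1
        (Or.inl one_ne_zero) _)
    obtain ⟨c, d, hcd⟩ := basis2_span B43 y
    refine ⟨d, ?_⟩
    rw [hy, hcd, hB43a, hB43b, Preadditive.add_comp, Linear.smul_comp, Linear.smul_comp,
      ha3i, smul_zero, zero_add]
  -- K₂m
  have vK2mAll : ∀ (k : ℕ), 1 ≤ k → k ≤ 4 → ∀ (q : ℤ), q ≠ 0 →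
      ∀ t : St.P k ⟶ TDm.K₂⟦q⟧, t = 0 := by
    intro k hk1 hk4 q hq
    by_cases hqm : q = -1
    · subst hqm
      refine covKer TDm.tri₂ (St.P k)
        (vP St k 2 hk1 hk4 (by norm_num) (by norm_num) (-1) (Or.inl (by norm_num))) ?_
      intro x hx
      change St.P k ⟶ TDm.K₁ at x
      change x ≫ TDm.v₁ = 0 at hx
      change x = (0 : St.P k ⟶ TDm.K₁)
      interval_cases k
      · obtain ⟨y, hy⟩ := coyMk₃ TDm.tri₁ x
          (vP St 1 4 (by norm_num) (by norm_num) (by norm_num) (by norm_num) 1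
            (Or.inl one_ne_zero) _)
        rw [hy, vP0 St 1 3 (by norm_num) (by norm_num) (by norm_num) (by norm_num)
          (by norm_num) y, Limits.zero_comp]
      · obtain ⟨y, hy⟩ := coyMk₃ TDm.tri₁ x
          (vP St 2 4 (by norm_num) (by norm_num) (by norm_num) (by norm_num) 1
            (Or.inl one_ne_zero) _)
        rw [hy, vP0 St 2 3 (by norm_num) (by norm_num) (by norm_num) (by norm_num)
          (by norm_num) y, Limits.zero_comp]
      · obtain ⟨c, hc⟩ := spanK1m3 x
        have hx2 : c • St.b 2 = 0 := by
          rw [hc, Linear.smul_comp] at hx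
          rw [← TDm.fac₁]
          exact hx
        rcases smul_eq_zero.mp hx2 with h | h
        · rw [hc, h, zero_smul]
        · exact absurd h b2ne
      · obtain ⟨c, hc⟩ := spanK1m4 x
        have hx2 : c • (St.b 3 ≫ St.b 2) = 0 := by
          rw [hc, Linear.smul_comp, Category.assoc, TDm.fac₁] at hx
          exact hx
        rcases smul_eq_zero.mp hx2 with h | h
        · rw [hc, h, zero_smul]
        · exact absurd h bbne
    · exact covThird TDm.tri₂ (St.P k) q
        (vP St k 2 hk1 hk4 (by norm_num) (by norm_num) q (Or.inl hq))
        (vK1mAll k hk1 hk4 (q+1) (by omega))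
  have hb2i : St.b 2 ≫ TDm.ι₂ = 0 := by
    have h1 : TDm.v₁ ≫ TDm.ι₂ = 0 := comp_distTriang_mor_zero₁₂ _ TDm.tri₂
    calc St.b 2 ≫ TDm.ι₂ = (TDm.ι₁ ≫ TDm.v₁) ≫ TDm.ι₂ := by rw [TDm.fac₁]
    _ = TDm.ι₁ ≫ (TDm.v₁ ≫ TDm.ι₂) := Category.assoc _ _ _
    _ = 0 := by rw [h1, Limits.comp_zero]
  have spanK2m1 : ∀ x : St.P 1 ⟶ TDm.K₂, x = 0 := by
    intro x
    obtain ⟨y, hy⟩ := coyMk₃ TDm.tri₂ x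
      (vK1mAll 1 (by norm_num) (by norm_num) 1 one_ne_zero _)
    rw [hy, vP0 St 1 2 (by norm_num) (by norm_num) (by norm_num) (by norm_num) (by norm_num) y,
      Limits.zero_comp]
  have spanK2m2 : ∀ x : St.P 2 ⟶ TDm.K₂, ∃ c : ℂ, x = c • TDm.ι₂ := by
    intro x
    obtain ⟨y, hy⟩ := coyMk₃ TDm.tri₂ x
      (vK1mAll 2 (by norm_num) (by norm_num) 1 one_ne_zero _)
    obtain ⟨c, hc⟩ := espanS St 2 (by norm_num) (by norm_num) y
    exact ⟨c, by rw [hy, hc, Linear.smul_comp, Category.id_comp]⟩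
  have spanK2m3 : ∀ x : St.P 3 ⟶ TDm.K₂, ∃ c : ℂ, x = c • (St.a 2 ≫ TDm.ι₂) := by
    intro x
    obtain ⟨y, hy⟩ := coyMk₃ TDm.tri₂ x
      (vK1mAll 3 (by norm_num) (by norm_num) 1 one_ne_zero _)
    obtain ⟨c, d, hcd⟩ := basis2_span B32 y
    refine ⟨c, ?_⟩
    rw [hy, hcd, hB32a, hB32b, Preadditive.add_comp, Linear.smul_comp, Linear.smul_comp,
      hb2i, smul_zero, add_zero]
  have spanK2m4 : ∀ x : St.P 4 ⟶ TDm.K₂, ∃ c : ℂ, x = c • ((St.a 3 ≫ St.a 2) ≫ TDm.ι₂) := by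
    intro x
    obtain ⟨y, hy⟩ := coyMk₃ TDm.tri₂ x
      (vK1mAll 4 (by norm_num) (by norm_num) 1 one_ne_zero _)
    obtain ⟨c, d, hcd⟩ := basis2_span B42 y
    refine ⟨c, ?_⟩
    rw [hy, hcd, hB42a, hB42b, Preadditive.add_comp, Linear.smul_comp, Linear.smul_comp,
      Category.assoc (St.b 3), hb2i, Limits.comp_zero, smul_zero, add_zero]
  -- Sm itself
  have vSmAll : ∀ (k : ℕ), 1 ≤ k → k ≤ 4 → ∀ (q : ℤ), q ≠ 0 →
      ∀ t : St.P k ⟶ Sm⟦q⟧, t = 0 := by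
    intro k hk1 hk4 q hq
    by_cases hqm : q = -1
    · subst hqm
      refine covKer TDm.tri₃ (St.P k)
        (vP St k 1 hk1 hk4 (by norm_num) (by norm_num) (-1) (Or.inl (by norm_num))) ?_
      intro x hx
      change St.P k ⟶ TDm.K₂ at x
      change x ≫ TDm.v₂ = 0 at hx
      change x = (0 : St.P k ⟶ TDm.K₂)
      interval_cases k
      · exact spanK2m1 x
      · obtain ⟨c, hc⟩ := spanK2m2 x
        have hx2 : c • St.a 1 = 0 := by
          rw [hc, Linear.smul_comp] at hx
          rw [← TDm.fac₂]
          exact hx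
        rcases smul_eq_zero.mp hx2 with h | h
        · rw [hc, h, zero_smul]
        · exact absurd h a1ne
      · obtain ⟨c, hc⟩ := spanK2m3 x
        have hx2 : c • (St.a 2 ≫ St.a 1) = 0 := by
          rw [hc, Linear.smul_comp, Category.assoc, TDm.fac₂] at hx
          exact hx
        rcases smul_eq_zero.mp hx2 with h | h
        · rw [hc, h, zero_smul]
        · exact absurd h aane
      · obtain ⟨c, hc⟩ := spanK2m4 x
        have hx2 : c • (St.a 3 ≫ St.a 2 ≫ St.a 1) = 0 := by
          rw [hc, Linear.smul_comp, Category.assoc, Category.assoc, TDm.fac₂] at hx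
          exact hx
        rcases smul_eq_zero.mp hx2 with h | h
        · rw [hc, h, zero_smul]
        · exact absurd h aaane
    · exact covThird TDm.tri₃ (St.P k) q
        (vP St k 1 hk1 hk4 (by norm_num) (by norm_num) q (Or.inl hq))
        (vK2mAll k hk1 hk4 (q+1) (by omega))
  have ha1i : St.a 1 ≫ TDm.ι₃ = 0 := by
    have h1 : TDm.v₂ ≫ TDm.ι₃ = 0 := comp_distTriang_mor_zero₁₂ _ TDm.tri₃
    calc St.a 1 ≫ TDm.ι₃ = (TDm.ι₂ ≫ TDm.v₂) ≫ TDm.ι₃ := by rw [TDm.fac₂]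
    _ = TDm.ι₂ ≫ (TDm.v₂ ≫ TDm.ι₃) := Category.assoc _ _ _
    _ = 0 := by rw [h1, Limits.comp_zero]
  have spanSm1 : ∀ x : St.P 1 ⟶ Sm, ∃ c : ℂ, x = c • TDm.ι₃ := by
    intro x
    obtain ⟨y, hy⟩ := coyMk₃ TDm.tri₃ x
      (vK2mAll 1 (by norm_num) (by norm_num) 1 one_ne_zero _)
    obtain ⟨c, hc⟩ := espanS St 1 (by norm_num) (by norm_num) y
    exact ⟨c, by rw [hy, hc, Linear.smul_comp, Category.id_comp]⟩
  have spanSm2 : ∀ x : St.P 2 ⟶ Sm, ∃ c : ℂ, x = c • (St.b 1 ≫ TDm.ι₃) := by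
    intro x
    obtain ⟨y, hy⟩ := coyMk₃ TDm.tri₃ x
      (vK2mAll 2 (by norm_num) (by norm_num) 1 one_ne_zero _)
    obtain ⟨c, d, hcd⟩ := basis2_span B21 y
    refine ⟨d, ?_⟩
    rw [hy, hcd, hB21a, hB21b, Preadditive.add_comp, Linear.smul_comp, Linear.smul_comp,
      ha1i, smul_zero, zero_add]
  have spanSm3 : ∀ x : St.P 3 ⟶ Sm, ∃ c : ℂ, x = c • ((St.b 2 ≫ St.b 1) ≫ TDm.ι₃) := by
    intro x
    obtain ⟨y, hy⟩ := coyMk₃ TDm.tri₃ x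
      (vK2mAll 3 (by norm_num) (by norm_num) 1 one_ne_zero _)
    obtain ⟨c, d, hcd⟩ := basis2_span B31 y
    refine ⟨d, ?_⟩
    rw [hy, hcd, hB31a, hB31b, Preadditive.add_comp, Linear.smul_comp, Linear.smul_comp,
      Category.assoc (St.a 2), ha1i, Limits.comp_zero, smul_zero, zero_add]
  have spanSm4 : ∀ x : St.P 4 ⟶ Sm, ∃ c : ℂ, x = c • ((St.b 3 ≫ St.b 2 ≫ St.b 1) ≫ TDm.ι₃) := by
    intro x
    obtain ⟨y, hy⟩ := coyMk₃ TDm.tri₃ x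
      (vK2mAll 4 (by norm_num) (by norm_num) 1 one_ne_zero _)
    obtain ⟨c, d, hcd⟩ := basis2_span B41 y
    refine ⟨d, ?_⟩
    rw [hy, hcd, hB41a, hB41b, Preadditive.add_comp, Linear.smul_comp, Linear.smul_comp]
    have hz : (St.a 3 ≫ St.a 2 ≫ St.a 1) ≫ TDm.ι₃ = 0 := by
      rw [Category.assoc, Category.assoc, ha1i, Limits.comp_zero, Limits.comp_zero]
    rw [hz, smul_zero, zero_add]
  -- nonzero facts
  have nzb1i : St.b 1 ≫ TDm.ι₃ ≠ 0 := by
    intro h0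
    obtain ⟨z, hz⟩ := coyMk₂ TDm.tri₃ (St.b 1) h0
    obtain ⟨c, hc⟩ := spanK2m2 z
    rw [hc, Linear.smul_comp, TDm.fac₂] at hz
    have h2 : c • St.a 1 + (-1 : ℂ) • St.b 1 = 0 := by
      rw [neg_one_smul, ← hz, add_neg_cancel]
    rw [← hB21a, ← hB21b] at h2
    obtain ⟨_, h4⟩ := basis2_indep B21 h2
    norm_num at h4
  have nzbbbi : (St.b 3 ≫ St.b 2 ≫ St.b 1) ≫ TDm.ι₃ ≠ 0 := by
    intro h0
    obtain ⟨z, hz⟩ := coyMk₂ TDm.tri₃ (St.b 3 ≫ St.b 2 ≫ St.b 1) h0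
    obtain ⟨c, hc⟩ := spanK2m4 z
    rw [hc, Linear.smul_comp, Category.assoc, Category.assoc, TDm.fac₂] at hz
    have h2 : c • (St.a 3 ≫ St.a 2 ≫ St.a 1) + (-1 : ℂ) • (St.b 3 ≫ St.b 2 ≫ St.b 1) = 0 := by
      rw [neg_one_smul, ← hz, add_neg_cancel]
    rw [← hB41a, ← hB41b] at h2
    obtain ⟨_, h4⟩ := basis2_indep B41 h2
    norm_num at h4
  -- ==== the Sp chain against Sm ====
  have vK1Sm : ∀ (r : ℤ) (Z : D) (E : Z ≅ Sm⟦r⟧) (t : TDp.K₁ ⟶ Z), t = 0 := by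
    intro r Z E t
    refine coneVanish TDp.tri₁ ?_ ?_ t
    · by_cases hr : r = 0
      · subst hr
        intro x hx
        refine mutInj (v := St.b 3) (ι := 𝟙 (St.P 4)) spanSm3 ?_ (E ≪≫ s0Iso Sm) x hx
        intro hcon
        apply nzbbbi
        rw [Category.id_comp] at hcon
        rw [Category.assoc]
        exact hcon
      · exact fun x _ => vIso E (vSmAll 3 (by norm_num) (by norm_num) r hr) x
    · by_cases hr : r = 1
      · subst hr
        intro h₀
        have E' : ((Z⟦(-1:ℤ)⟧ : D) ≅ Sm) :=
          (shiftFunctor D (-1:ℤ)).mapIso E ≪≫ sIso Sm 1 (-1) 0 (by ring) ≪≫ s0Iso Sm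
        refine mutFac (contractible_distinguished₁ (St.P 4)) (v := St.b 3)
          (gY := (St.b 2 ≫ St.b 1) ≫ TDm.ι₃) ?_
          (fun t' => (Limits.isZero_zero D).eq_of_src t' 0) E' h₀
        intro x
        obtain ⟨c, hc⟩ := spanSm4 x
        refine ⟨c, ?_⟩
        rw [hc, Category.id_comp, Category.assoc]
      · intro h₀
        refine ⟨0, ?_⟩
        rw [Limits.comp_zero]
        exact vIso (downIso E) (vSmAll 4 (by norm_num) (by norm_num) (r-1) (by omega)) h₀
  have vK2Sm : ∀ (q : ℤ), q ≠ 0 → ∀ (Z : D) (E : Z ≅ Sm⟦q⟧) (t : TDp.K₂ ⟶ Z), t = 0 := by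
    intro q hq Z E t
    exact coneVanish TDp.tri₂
      (fun x _ => vIso E (vSmAll 2 (by norm_num) (by norm_num) q hq) x)
      (fun h₀ => ⟨0, by rw [Limits.comp_zero]; exact vK1Sm (q-1) _ (downIso E) h₀⟩) t
  refine coneVanish TDp.tri₃ ?_ ?_ f
  · by_cases hp : p = 0
    · subst hp
      intro x hx
      refine mutInj (v := TDp.v₂) (ι := TDp.ι₂) spanSm1 ?_ (s0Iso Sm) x hx
      rw [TDp.fac₂]
      exact nzb1i
    · exact fun x _ => vSmAll 1 (by norm_num) (by norm_num) p hp x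
  · by_cases hp : p = 1
    · subst hp
      intro h₀
      have E' : (((Sm⟦(1:ℤ)⟧)⟦(-1:ℤ)⟧ : D) ≅ Sm) := sIso Sm 1 (-1) 0 (by ring) ≪≫ s0Iso Sm
      refine mutFac TDp.tri₂ (v := TDp.v₂) (gY := TDm.ι₃) ?_
        (fun t' => vK1Sm (-1) _ (Iso.refl _) t') E' h₀
      intro x
      obtain ⟨c, hc⟩ := spanSm2 x
      refine ⟨c, ?_⟩
      rw [hc]
      congr 1
      rw [← Category.assoc, TDp.fac₂]
    · intro h₀
      refine ⟨0, ?_⟩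
      rw [Limits.comp_zero]
      exact vK2Sm (p-1) (by omega) _ (downIso (Iso.refl (Sm⟦p⟧))) h₀

end Statement8G3

/-- Let `μ = 4`, `S₊`, `S₋` as above, and for `i = 1, 2, 3` let `S_i` be the
cone of `α_{4-i} + β_{4-i} : P(5-i) → P(4-i)`.  Then `RHom(S₊, S_i) ≅ 0 ≅ RHom(S₋, S_i)` for
`i = 1, 2, 3`, and `RHom(S₊, S₋) ≅ 0`. -/
theorem statement8 (St : Setup 4 D) (Sp Sm : D)
    (TDp : TotData (St.P 4) (St.P 3) (St.P 2) (St.P 1) Sp (St.b 3) (St.a 2) (St.b 1))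
    (TDm : TotData (St.P 4) (St.P 3) (St.P 2) (St.P 1) Sm (St.a 3) (St.b 2) (St.a 1))
    (S : ℕ → D) (g : ∀ i : ℕ, St.P (4 - i) ⟶ S i) (w : ∀ i : ℕ, S i ⟶ (St.P (4 - i + 1))⟦(1 : ℤ)⟧)
    (hT : ∀ i : ℕ, 1 ≤ i → i ≤ 3 →
      Triangle.mk (St.a (4 - i) + St.b (4 - i)) (g i) (w i) ∈ distinguishedTriangles (C := D)) :
    (∀ i : ℕ, 1 ≤ i → i ≤ 3 →
      homsAre Sp (S i) (fun _ => 0) ∧ homsAre Sm (S i) (fun _ => 0)) ∧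
    homsAre Sp Sm (fun _ => 0) := by
  constructor
  · intro i hi1 hi3
    have hT' : Triangle.mk ((swapSetup St).a (4-i) + (swapSetup St).b (4-i)) (g i) (w i) ∈
        distTriang D := by
      have hcomm : (swapSetup St).a (4-i) + (swapSetup St).b (4-i)
          = St.a (4-i) + St.b (4-i) := add_comm _ _
      rw [hcomm]
      exact hT i hi1 hi3
    constructor
    · intro p
      exact equiv0_of_vanish (fun f => G1 St TDp (by omega) (by omega) (hT i hi1 hi3) p f)
    · intro p
      exact equiv0_of_vanish (fun f => G1 (swapSetup St) TDm (by omega) (by omega) hT' p f)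
  · intro p
    exact equiv0_of_vanish (fun f => G3 St TDp TDm p f)

end CHS
end

section
/- Let μ ≥ 2 and let S_1 be the cone of f_1 = α_{μ−1} + β_{μ−1} : P(μ) → P(μ−1) in D = D^b mod(ℂQ/I). Then RHom_D(S_1, P(k)) ≅ ℂ[−1] for k = μ and k = μ−1, and RHom_D(S_1, P(k)) ≅ 0 for all k ∉ {μ, μ−1}. Consequently the spherical twist T_{S_1} satisfies T_{S_1}(P(μ)) ≅ P(μ−1) and T_{S_1}(P(k)) ≅ P(k) for k ≤ μ−2. -/
namespace CHS

open CategoryTheory Limits Pretriangulated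

universe v u

variable {D : Type u} [Category.{v} D] [Preadditive D] [HasZeroObject D] [HasShift D ℤ]
  [∀ n : ℤ, (shiftFunctor D n).Additive] [Pretriangulated D] [Linear ℂ D]
section AuxLemmas

open ZeroObject

variable {D : Type u} [Category.{v} D] [Preadditive D] [HasZeroObject D] [HasShift D ℤ]
  [∀ n : ℤ, (shiftFunctor D n).Additive] [Pretriangulated D] [Linear ℂ D]

set_option linter.unusedSectionVars false

private lemma CHSlinEquiv_zero {X Y : D} (h : ∀ u : X ⟶ Y, u = 0) :
    Nonempty ((X ⟶ Y) ≃ₗ[ℂ] (Fin 0 → ℂ)) := by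
  constructor
  exact { toFun := fun _ => 0, map_add' := by simp, map_smul' := by simp,
          invFun := fun _ => 0, left_inv := fun x => (h x).symm,
          right_inv := fun y => funext fun i => i.elim0 }

private lemma CHSlinEquiv_one {X Y : D} (v : X ⟶ Y) (hv : v ≠ 0)
    [∀ X Y : D, FiniteDimensional ℂ (X ⟶ Y)]
    (hs : ∀ u : X ⟶ Y, ∃ c : ℂ, u = c • v) : Nonempty ((X ⟶ Y) ≃ₗ[ℂ] (Fin 1 → ℂ)) := by
  have h1 : Module.finrank ℂ (X ⟶ Y) = 1 :=
    finrank_eq_one v hv (fun u => (hs u).imp fun c hc => hc.symm)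
  exact ⟨(Module.basisUnique (Fin 1) h1).equivFun⟩

private noncomputable def CHSpostcompEquiv {X Y Z : D} (e : Y ≅ Z) :
    (X ⟶ Y) ≃ₗ[ℂ] (X ⟶ Z) :=
  LinearEquiv.ofLinear (Linear.rightComp ℂ X e.hom) (Linear.rightComp ℂ X e.inv)
    (by ext u; simp) (by ext u; simp)

private lemma CHSshiftHom_subsingleton {X Y : D} {p q : ℤ} (h : q + 1 = p)
    (hs : Subsingleton (X ⟶ Y⟦q⟧)) : Subsingleton (X⟦(1:ℤ)⟧ ⟶ Y⟦p⟧) := by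
  haveI := hs
  have e : (X ⟶ Y⟦q⟧) ≃ (X⟦(1:ℤ)⟧ ⟶ Y⟦p⟧) :=
    ((Functor.FullyFaithful.ofFullyFaithful (shiftFunctor D (1:ℤ))).homEquiv).trans
      (Iso.homCongr (Iso.refl _) ((shiftFunctorAdd' D q 1 p h).symm.app Y))
  exact e.symm.subsingleton

private lemma CHSscalarEnd [∀ X Y : D, FiniteDimensional ℂ (X ⟶ Y)] {X : D}
    (hid : 𝟙 X ≠ 0) (hX : ∀ e : X ⟶ X, ∃ c : ℂ, e = c • 𝟙 X) (n : ℤ)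
    (ψ : X⟦n⟧ ⟶ X⟦n⟧) : ∃ c : ℂ, ψ = c • 𝟙 (X⟦n⟧) := by
  have hid' : 𝟙 (X⟦n⟧) ≠ 0 := by
    intro h
    apply hid
    apply (shiftFunctor D n).map_injective
    rw [CategoryTheory.Functor.map_id, Functor.map_zero, h]
  have hiso : ∀ ψ' : X⟦n⟧ ⟶ X⟦n⟧, IsIso ψ' ↔ ψ' ≠ 0 := by
    intro ψ'
    constructor
    · intro h h0
      subst h0
      apply hid'
      rw [← IsIso.hom_inv_id (0 : X⟦n⟧ ⟶ X⟦n⟧), zero_comp]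
    · intro h
      obtain ⟨e, he⟩ := (shiftFunctor D n).map_surjective ψ'
      obtain ⟨c, rfl⟩ := hX e
      have hc : c ≠ 0 := by
        rintro rfl
        exact h (by rw [← he, zero_smul, Functor.map_zero])
      haveI : IsIso (c • 𝟙 X) := ⟨c⁻¹ • 𝟙 X, by simp [smul_smul, hc], by simp [smul_smul, hc]⟩
      rw [← he]; infer_instance
  have h1 : Module.finrank ℂ (X⟦n⟧ ⟶ X⟦n⟧) = 1 := finrank_endomorphism_eq_one ℂ hiso
  obtain ⟨c, hc⟩ := (finrank_eq_one_iff_of_nonzero' (𝟙 (X⟦n⟧)) hid').mp h1 ψ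
  exact ⟨c, hc.symm⟩

private lemma CHScoeffs_eq_zero {M : Type*} [AddCommGroup M] [Module ℂ M]
    (B : Module.Basis (Fin 2) ℂ M) {x y : ℂ} (h : x • B 0 + y • B 1 = 0) : x = 0 ∧ y = 0 := by
  have h2 := Fintype.linearIndependent_iff.mp B.linearIndependent ![x, y] ?_
  · exact ⟨h2 0, h2 1⟩
  · rw [Fin.sum_univ_two]
    simpa using h

private lemma CHSrepr_two {M : Type*} [AddCommGroup M] [Module ℂ M]
    (B : Module.Basis (Fin 2) ℂ M) (χ : M) : ∃ x y : ℂ, χ = x • B 0 + y • B 1 := by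
  refine ⟨B.repr χ 0, B.repr χ 1, ?_⟩
  have := B.sum_repr χ
  rw [Fin.sum_univ_two] at this
  exact this.symm

private lemma CHSpathComp_succ (P : ℕ → D) (f : ∀ i : ℕ, P (i + 1) ⟶ P i) (j k : ℕ) :
    pathComp P f j (k + 1) = f (j + k) ≫ pathComp P f j k := rfl

private lemma CHSpathComp_one (P : ℕ → D) (f : ∀ i : ℕ, P (i + 1) ⟶ P i) (j : ℕ) :
    pathComp P f j 1 = f j := by
  show f (j + 0) ≫ pathComp P f j 0 = f j
  exact Category.comp_id (f j)


private lemma CHShomsAre_subsingleton {X Y : D} {c : ℤ → ℕ} (h : homsAre X Y c) {p : ℤ}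
    (hp : c p = 0) : Subsingleton (X ⟶ Y⟦p⟧) := by
  obtain ⟨e⟩ := h p
  rw [hp] at e
  exact e.toEquiv.subsingleton

private lemma CHShomsAre_finrank {X Y : D} {c : ℤ → ℕ} (h : homsAre X Y c) (p : ℤ) :
    Module.finrank ℂ (X ⟶ Y⟦p⟧) = c p := by
  obtain ⟨e⟩ := h p
  rw [e.finrank_eq]
  exact Module.finrank_fin_fun ℂ

private lemma CHShomsAre_mk {X Y : D} (c : ℤ → ℕ) [∀ X Y : D, FiniteDimensional ℂ (X ⟶ Y)]
    (h : ∀ p : ℤ, (c p = 0 ∧ ∀ u : X ⟶ Y⟦p⟧, u = 0) ∨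
      (c p = 1 ∧ ∃ v : X ⟶ Y⟦p⟧, v ≠ 0 ∧ ∀ u : X ⟶ Y⟦p⟧, ∃ s : ℂ, u = s • v)) :
    homsAre X Y c := by
  intro p
  rcases h p with ⟨h0, hall⟩ | ⟨h1, v, hv, hs⟩
  · rw [h0]
    exact CHSlinEquiv_zero hall
  · rw [h1]
    exact CHSlinEquiv_one v hv hs

end AuxLemmas

open ZeroObject in
/-- Let `μ ≥ 2` and `S₁ = cone(α_{μ-1} + β_{μ-1} : P(μ) → P(μ-1))`.
Then `RHom(S₁, P(k)) ≅ ℂ[-1]` for `k ∈ {μ, μ-1}` and `≅ 0` otherwise; consequently the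
spherical twist `T_{S₁}` satisfies `T_{S₁}(P(μ)) ≅ P(μ-1)` and `T_{S₁}(P(k)) ≅ P(k)` for
`k ≤ μ-2`. -/
theorem statement14 (μ : ℕ) (hμ : 2 ≤ μ)
    [HasFiniteBiproducts D] [∀ X Y : D, FiniteDimensional ℂ (X ⟶ Y)]
    (St : Setup μ D)
    (S1 : D) (g : St.P (μ - 1) ⟶ S1) (w : S1 ⟶ (St.P (μ - 1 + 1))⟦(1 : ℤ)⟧)
    (hT : Triangle.mk (St.a (μ - 1) + St.b (μ - 1)) g w ∈ distinguishedTriangles (C := D))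
    (T : D ⥤ D) (hTw : IsSphericalTwist S1 T) :
    (∀ k : ℕ, (k = μ ∨ k = μ - 1) →
      homsAre S1 (St.P k) (fun p => if p = 1 then 1 else 0)) ∧
    (∀ k : ℕ, 1 ≤ k → k ≤ μ → ¬ (k = μ ∨ k = μ - 1) →
      homsAre S1 (St.P k) (fun _ => 0)) ∧
    Nonempty (T.obj (St.P μ) ≅ St.P (μ - 1)) ∧
    (∀ k : ℕ, 1 ≤ k → k ≤ μ - 2 → Nonempty (T.obj (St.P k) ≅ St.P k)) := by
  obtain ⟨ν, rfl⟩ : ∃ ν, μ = ν + 1 := ⟨μ - 1, by omega⟩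
  have hν : 1 ≤ ν := by omega
  simp only [Nat.add_sub_cancel]
  obtain ⟨g', w', hT'⟩ : ∃ (g' : St.P ν ⟶ S1) (w' : S1 ⟶ (St.P (ν+1))⟦(1:ℤ)⟧),
      Triangle.mk (St.a ν + St.b ν) g' w' ∈ distinguishedTriangles (C := D) := ⟨g, w, hT⟩
  clear hT g w
  rename' g' => g, w' => w, hT' => hT
  -- basic subsingleton facts from the dimension hypotheses
  have hdsub : ∀ (i j : ℕ) (p : ℤ), 1 ≤ i → i ≤ ν + 1 → 1 ≤ j → j ≤ ν + 1 →
      (p ≠ 0 ∨ i < j) → Subsingleton (St.P i ⟶ (St.P j)⟦p⟧) := by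
    intro i j p h1 h2 h3 h4 hor
    refine CHShomsAre_subsingleton (St.hom_dims i j h1 h2 h3 h4) ?_
    rcases hor with h | h
    · simp [h]
    · have h5 : i ≠ j := by omega
      have h6 : ¬ j < i := by omega
      simp [h5, h6]
  have hzero : ∀ {i j : ℕ} {p : ℤ}, 1 ≤ i → i ≤ ν + 1 → 1 ≤ j → j ≤ ν + 1 →
      (p ≠ 0 ∨ i < j) → ∀ u : St.P i ⟶ (St.P j)⟦p⟧, u = 0 := by
    intro i j p h1 h2 h3 h4 hor u
    haveI := hdsub i j p h1 h2 h3 h4 hor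
    exact Subsingleton.elim u 0
  -- endomorphisms are scalars
  have hEnd : ∀ i : ℕ, 1 ≤ i → i ≤ ν + 1 →
      𝟙 (St.P i) ≠ 0 ∧ ∀ u : St.P i ⟶ St.P i, ∃ c : ℂ, u = c • 𝟙 (St.P i) := by
    intro i h1 h2
    have hfr0 : Module.finrank ℂ (St.P i ⟶ (St.P i)⟦(0:ℤ)⟧) = 1 := by
      rw [CHShomsAre_finrank (St.hom_dims i i h1 h2 h1 h2) 0]
      simp
    have e0 : St.P i ≅ (St.P i)⟦(0:ℤ)⟧ := ((shiftFunctorZero D ℤ).app (St.P i)).symm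
    have hfr : Module.finrank ℂ (St.P i ⟶ St.P i) = 1 := by
      rw [(CHSpostcompEquiv (X := St.P i) e0).finrank_eq]
      exact hfr0
    have hid : 𝟙 (St.P i) ≠ 0 := by
      intro h
      haveI : Subsingleton (St.P i ⟶ St.P i) :=
        ⟨fun a b => by
          rw [← Category.comp_id a, h, comp_zero, ← Category.comp_id b, h, comp_zero]⟩
      rw [Module.finrank_zero_of_subsingleton] at hfr
      exact one_ne_zero hfr.symm
    refine ⟨hid, fun u => ?_⟩
    obtain ⟨c, hcc⟩ := (finrank_eq_one_iff_of_nonzero' (𝟙 (St.P i)) hid).mp hfr u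
    exact ⟨c, hcc.symm⟩
  -- the basis of Hom(P(ν+1), P ν)
  obtain ⟨B2, hB20, hB21⟩ := St.hom_basis ν 1 hν le_rfl (by omega)
  have hB2a : B2 0 = St.a ν := by rw [hB20, CHSpathComp_one]
  have hB2b : B2 1 = St.b ν := by rw [hB21, CHSpathComp_one]
  have hfne : St.a ν + St.b ν ≠ 0 := by
    intro h
    have h' : (1:ℂ) • B2 0 + (1:ℂ) • B2 1 = 0 := by
      rw [hB2a, hB2b, one_smul, one_smul, h]
    exact one_ne_zero (CHScoeffs_eq_zero B2 h').1
  -- factoring through w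
  have hfactor : ∀ {Z : D} (φ : S1 ⟶ Z), g ≫ φ = 0 →
      ∃ ψ : (St.P (ν+1))⟦(1:ℤ)⟧ ⟶ Z, φ = w ≫ ψ := by
    intro Z φ h
    exact Triangle.yoneda_exact₃ _ hT φ h
  have hstep : ∀ (k : ℕ) (p : ℤ), 1 ≤ k → k ≤ ν + 1 → p ≠ 1 →
      ∀ φ : S1 ⟶ (St.P k)⟦p⟧, g ≫ φ = 0 → φ = 0 := by
    intro k p h1 h2 hp φ hg
    obtain ⟨ψ, hψ⟩ := hfactor φ hg
    haveI : Subsingleton ((St.P (ν+1))⟦(1:ℤ)⟧ ⟶ (St.P k)⟦p⟧) :=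
      CHSshiftHom_subsingleton (by ring)
        (hdsub (ν+1) k (p-1) (by omega) le_rfl h1 h2 (Or.inl (by omega)))
    rw [hψ, Subsingleton.elim ψ 0, comp_zero]
  -- vanishing for k = ν + 1
  have hvanA : ∀ (p : ℤ), p ≠ 1 → ∀ φ : S1 ⟶ (St.P (ν+1))⟦p⟧, φ = 0 := by
    intro p hp φ
    refine hstep (ν+1) p (by omega) le_rfl hp φ ?_
    exact hzero (i := ν) (j := ν+1) hν (by omega) (by omega) le_rfl (Or.inr (by omega)) _
  -- vanishing for k = ν, p = 0
  have hvanB0 : ∀ φ : S1 ⟶ (St.P ν)⟦(0:ℤ)⟧, φ = 0 := by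
    intro φ
    have hfg : (St.a ν + St.b ν) ≫ g = 0 := comp_distTriang_mor_zero₁₂ _ hT
    obtain ⟨c, hc⟩ := (hEnd ν hν (by omega)).2
      ((g ≫ φ) ≫ ((shiftFunctorZero D ℤ).app (St.P ν)).hom)
    have hgφ : g ≫ φ = (c • 𝟙 (St.P ν)) ≫ ((shiftFunctorZero D ℤ).app (St.P ν)).symm.hom := by
      rw [← hc, Iso.symm_hom, Category.assoc, Iso.hom_inv_id, Category.comp_id]
    have h2 : ((St.a ν + St.b ν) ≫ (c • 𝟙 (St.P ν))) ≫
        ((shiftFunctorZero D ℤ).app (St.P ν)).symm.hom = 0 := by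
      rw [Category.assoc, ← hgφ, ← Category.assoc, hfg, zero_comp]
    have h3 : (St.a ν + St.b ν) ≫ (c • 𝟙 (St.P ν)) = 0 :=
      (cancel_mono ((shiftFunctorZero D ℤ).app (St.P ν)).symm.hom).mp (by rw [h2, zero_comp])
    have hc0 : c = 0 := by
      rw [Linear.comp_smul, Category.comp_id] at h3
      rcases smul_eq_zero.mp h3 with h | h
      · exact h
      · exact absurd h hfne
    have hg0 : g ≫ φ = 0 := by rw [hgφ, hc0, zero_smul, zero_comp]
    exact hstep ν 0 hν (by omega) (by omega) φ hg0
  -- vanishing for k = ν, p ≠ 1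
  have hvanB : ∀ (p : ℤ), p ≠ 1 → ∀ φ : S1 ⟶ (St.P ν)⟦p⟧, φ = 0 := by
    intro p hp φ
    rcases eq_or_ne p 0 with rfl | hp0
    · exact hvanB0 φ
    · exact hstep ν p hν (by omega) hp φ (hzero hν (by omega) hν (by omega) (Or.inl hp0) _)
  -- vanishing for small k
  have hvansmall : ∀ (k m : ℕ), 1 ≤ k → ν = k + (m + 1) →
      ∀ (p : ℤ) (φ : S1 ⟶ (St.P k)⟦p⟧), φ = 0 := by
    intro k m h1 hm
    subst hm
    obtain ⟨BB, hBB0, hBB1⟩ := St.hom_basis k (m+1) h1 (by omega) (by omega)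
    obtain ⟨BA, hBA0, hBA1⟩ := St.hom_basis k (m+1+1) h1 (by omega) (by omega)
    have hba : St.b (k + (m + 1)) ≫ St.a (k + m) = 0 := St.rel_ba (k + m)
    have hab : St.a (k + (m + 1)) ≫ St.b (k + m) = 0 := St.rel_ab (k + m)
    have hfa : (St.a (k + (m+1)) + St.b (k + (m+1))) ≫ pathComp St.P St.a k (m+1)
        = pathComp St.P St.a k (m+1+1) := by
      rw [CHSpathComp_succ St.P St.a k (m+1), CHSpathComp_succ St.P St.a k m,
        Preadditive.add_comp]
      simp only [← Category.assoc, hba, zero_comp, add_zero]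
    have hfb : (St.a (k + (m+1)) + St.b (k + (m+1))) ≫ pathComp St.P St.b k (m+1)
        = pathComp St.P St.b k (m+1+1) := by
      rw [CHSpathComp_succ St.P St.b k (m+1), CHSpathComp_succ St.P St.b k m,
        Preadditive.add_comp]
      simp only [← Category.assoc, hab, zero_comp, zero_add]
    have hBAf0 : BA 0 = (St.a (k + (m+1)) + St.b (k + (m+1))) ≫ BB 0 := by
      rw [hBB0, hBA0, hfa]
    have hBAf1 : BA 1 = (St.a (k + (m+1)) + St.b (k + (m+1))) ≫ BB 1 := by
      rw [hBB1, hBA1, hfb]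
    intro p φ
    rcases eq_or_ne p 0 with rfl | hp0
    · -- p = 0
      have hfg : (St.a (k + (m+1)) + St.b (k + (m+1))) ≫ g = 0 :=
        comp_distTriang_mor_zero₁₂ _ hT
      obtain ⟨x, y, hxy⟩ := CHSrepr_two BB
        ((g ≫ φ) ≫ ((shiftFunctorZero D ℤ).app (St.P k)).hom)
      have h5 : (St.a (k + (m+1)) + St.b (k + (m+1))) ≫
          ((g ≫ φ) ≫ ((shiftFunctorZero D ℤ).app (St.P k)).hom) = 0 := by
        simp only [← Category.assoc]
        rw [hfg, zero_comp, zero_comp]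
      have h6 : x • BA 0 + y • BA 1 = 0 := by
        rw [hBAf0, hBAf1, ← Linear.comp_smul, ← Linear.comp_smul, ← Preadditive.comp_add,
          ← hxy, h5]
      obtain ⟨hx, hy⟩ := CHScoeffs_eq_zero BA h6
      have h7 : (g ≫ φ) ≫ ((shiftFunctorZero D ℤ).app (St.P k)).hom = 0 := by
        rw [hxy, hx, hy, zero_smul, zero_smul, add_zero]
      have hg0 : g ≫ φ = 0 :=
        (cancel_mono ((shiftFunctorZero D ℤ).app (St.P k)).hom).mp (by rw [h7, zero_comp])
      exact hstep k 0 h1 (by omega) (by omega) φ hg0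
    rcases eq_or_ne p 1 with rfl | hp1
    · -- p = 1
      have hg0 : g ≫ φ = 0 :=
        hzero (i := k + (m+1)) (j := k) (by omega) (by omega) h1 (by omega)
          (Or.inl one_ne_zero) _
      obtain ⟨ψ, hψ⟩ := hfactor φ hg0
      obtain ⟨χ, hχ⟩ := (shiftFunctor D (1:ℤ)).map_surjective ψ
      obtain ⟨x, y, hxy⟩ := CHSrepr_two BA χ
      have hwf : w ≫ (St.a (k + (m+1)) + St.b (k + (m+1)))⟦(1:ℤ)⟧' = 0 :=
        comp_distTriang_mor_zero₃₁ _ hT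
      have hχ2 : χ = (St.a (k + (m+1)) + St.b (k + (m+1))) ≫ (x • BB 0 + y • BB 1) := by
        rw [hxy, hBAf0, hBAf1, Preadditive.comp_add, Linear.comp_smul, Linear.comp_smul]
      rw [hψ, ← hχ, hχ2, Functor.map_comp, ← Category.assoc, hwf, zero_comp]
    · -- other p
      exact hstep k p h1 (by omega) hp1 φ
        (hzero (i := k + (m+1)) (j := k) (by omega) (by omega) h1 (by omega) (Or.inl hp0) _)
  -- w is nonzero
  have hw0 : w ≠ 0 := by
    intro hw
    obtain ⟨s, hs⟩ := Triangle.coyoneda_exact₃ _ hT (𝟙 S1) (by exact (Category.id_comp _).trans hw)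
    have hs0 : s = 0 := by
      have h1 : s ≫ ((shiftFunctorZero D ℤ).app (St.P ν)).symm.hom = 0 := hvanB0 _
      exact (cancel_mono ((shiftFunctorZero D ℤ).app (St.P ν)).symm.hom).mp
        (h1.trans zero_comp.symm)
    have hid1 : 𝟙 S1 = 0 := by rw [hs, hs0, zero_comp]; rfl
    have hg0 : g = 0 := by rw [← Category.comp_id g, hid1, comp_zero]
    obtain ⟨t, ht⟩ := Triangle.coyoneda_exact₂ _ hT (𝟙 (St.P ν))
      (by exact (Category.id_comp _).trans hg0)
    have ht0 : t = 0 := by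
      haveI := hdsub ν (ν+1) 0 hν (by omega) (by omega) le_rfl (Or.inr (by omega))
      have e0 : St.P (ν+1) ≅ (St.P (ν+1))⟦(0:ℤ)⟧ :=
        ((shiftFunctorZero D ℤ).app (St.P (ν+1))).symm
      haveI : Subsingleton (St.P ν ⟶ St.P (ν+1)) :=
        (CHSpostcompEquiv (X := St.P ν) e0).toEquiv.subsingleton
      exact Subsingleton.elim (α := St.P ν ⟶ St.P (ν+1)) t 0
    exact (hEnd ν hν (by omega)).1 (by rw [ht, ht0, zero_comp]; rfl)
  -- spanning for k = ν + 1, p = 1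
  have hspanA : ∀ φ : S1 ⟶ (St.P (ν+1))⟦(1:ℤ)⟧, ∃ c : ℂ, φ = c • w := by
    intro φ
    have hg0 : g ≫ φ = 0 :=
      hzero (i := ν) (j := ν+1) hν (by omega) (by omega) le_rfl (Or.inl one_ne_zero) _
    obtain ⟨ψ, hψ⟩ := hfactor φ hg0
    obtain ⟨c, hc⟩ := CHSscalarEnd (hEnd (ν+1) (by omega) le_rfl).1
      (hEnd (ν+1) (by omega) le_rfl).2 1 ψ
    exact ⟨c, by rw [hψ, hc, Linear.comp_smul, Category.comp_id]⟩
  -- spanning for k = ν, p = 1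
  have hspanB : ∀ φ : S1 ⟶ (St.P ν)⟦(1:ℤ)⟧, ∃ c : ℂ, φ = c • (w ≫ (St.a ν)⟦(1:ℤ)⟧') := by
    intro φ
    have hg0 : g ≫ φ = 0 :=
      hzero (i := ν) (j := ν) hν (by omega) hν (by omega) (Or.inl one_ne_zero) _
    obtain ⟨ψ, hψ⟩ := hfactor φ hg0
    obtain ⟨χ, hχ⟩ := (shiftFunctor D (1:ℤ)).map_surjective ψ
    obtain ⟨x, y, hxy⟩ := CHSrepr_two B2 χ
    have hsplit : χ = ((St.a ν + St.b ν) ≫ (y • 𝟙 (St.P ν)))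
        + (((x - y) • 𝟙 (St.P (ν+1))) ≫ St.a ν) := by
      rw [hxy, hB2a, hB2b, Linear.comp_smul, Category.comp_id, Linear.smul_comp,
        Category.id_comp, smul_add, sub_smul]
      abel
    obtain ⟨c, hc⟩ := CHSscalarEnd (hEnd (ν+1) (by omega) le_rfl).1
      (hEnd (ν+1) (by omega) le_rfl).2 1 (((x - y) • 𝟙 (St.P (ν+1)))⟦(1:ℤ)⟧')
    have hwf : w ≫ (St.a ν + St.b ν)⟦(1:ℤ)⟧' = 0 := comp_distTriang_mor_zero₃₁ _ hT
    refine ⟨c, ?_⟩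
    rw [hψ, ← hχ, hsplit, Functor.map_add, Functor.map_comp, Functor.map_comp,
      Preadditive.comp_add, ← Category.assoc, hwf, zero_comp, zero_add,
      ← Category.assoc, hc, Linear.comp_smul, Category.comp_id, Linear.smul_comp]
  -- w ≫ a⟦1⟧ is nonzero
  have hφa0 : w ≫ (St.a ν)⟦(1:ℤ)⟧' ≠ 0 := by
    intro h0
    obtain ⟨ρ, hρ⟩ := Triangle.yoneda_exact₃ _ (rot_of_distTriang _ hT) ((St.a ν)⟦(1:ℤ)⟧') h0
    have hρ' : (St.a ν)⟦(1:ℤ)⟧' = (-((St.a ν + St.b ν)⟦(1:ℤ)⟧')) ≫ ρ := hρ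
    obtain ⟨τ, hτ⟩ : ∃ τ : St.P ν ⟶ St.P ν, τ⟦(1:ℤ)⟧' = ρ := (shiftFunctor D (1:ℤ)).map_surjective ρ
    obtain ⟨c, hc⟩ := (hEnd ν hν (by omega)).2 τ
    have key : St.a ν = -((St.a ν + St.b ν) ≫ τ) := by
      apply (shiftFunctor D (1:ℤ)).map_injective
      rw [Functor.map_neg, Functor.map_comp, ← Preadditive.neg_comp]
      exact hρ'.trans (congrArg (fun t => (-((St.a ν + St.b ν)⟦(1:ℤ)⟧')) ≫ t) hτ.symm)
    rw [hc, Linear.comp_smul, Category.comp_id] at key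
    have key2 : (1 + c) • B2 0 + c • B2 1 = St.a ν + c • (St.a ν + St.b ν) := by
      rw [hB2a, hB2b, add_smul, one_smul, smul_add]
      abel
    have key4 : St.a ν + c • (St.a ν + St.b ν) = 0 := by
      nth_rewrite 1 [key]
      exact neg_add_cancel _
    obtain ⟨ha, hb⟩ := CHScoeffs_eq_zero B2 (key2.trans key4)
    rw [hb, add_zero] at ha
    exact one_ne_zero ha
  refine ⟨?_, ?_, ?_, ?_⟩
  · -- homological statement for k = ν+1 and k = ν
    rintro k (rfl | rfl)
    · refine CHShomsAre_mk _ (fun p => ?_)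
      rcases eq_or_ne p 1 with rfl | hp
      · exact Or.inr ⟨by simp, w, hw0, hspanA⟩
      · exact Or.inl ⟨by simp [hp], hvanA p hp⟩
    · refine CHShomsAre_mk _ (fun p => ?_)
      rcases eq_or_ne p 1 with rfl | hp
      · exact Or.inr ⟨by simp, _, hφa0, hspanB⟩
      · exact Or.inl ⟨by simp [hp], hvanB p hp⟩
  · -- vanishing for the other k
    rintro k h1 h2 h3
    obtain ⟨m, hm⟩ : ∃ m, ν = k + (m + 1) := ⟨ν - k - 1, by omega⟩
    exact CHShomsAre_mk _ (fun p => Or.inl ⟨rfl, hvansmall k m h1 hm p⟩)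
  · -- the twist sends P (ν+1) to P ν
    obtain ⟨N, gA, wA, hbound, hdist⟩ := hTw.twistTriangle (St.P (ν+1))
    have frk1 : Module.finrank ℂ (S1 ⟶ (St.P (ν+1))⟦(1:ℤ)⟧) = 1 :=
      finrank_eq_one w hw0 (fun u => (hspanA u).imp fun c hc => hc.symm)
    have frk0 : ∀ p : ℤ, p ≠ 1 → Module.finrank ℂ (S1 ⟶ (St.P (ν+1))⟦p⟧) = 0 := by
      intro p hp
      haveI : Subsingleton (S1 ⟶ (St.P (ν+1))⟦p⟧) :=
        ⟨fun u₁ u₂ => by rw [hvanA p hp u₁, hvanA p hp u₂]⟩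
      exact Module.finrank_zero_of_subsingleton
    have hN : (1:ℤ) ∈ Finset.Icc (-(N:ℤ)) (N:ℤ) := by
      rw [Finset.mem_Icc]
      by_contra hcon
      refine hw0 (hbound 1 ?_ w)
      omega
    let ι : Type := Σ p : (Finset.Icc (-(N : ℤ)) (N : ℤ)),
      Fin (Module.finrank ℂ (S1 ⟶ (St.P (ν+1))⟦(p.1 : ℤ)⟧))
    let j₀ : ι := ⟨⟨1, hN⟩, ⟨0, lt_of_lt_of_eq Nat.one_pos frk1.symm⟩⟩
    have huniq : ∀ j : ι, j = j₀ := by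
      rintro ⟨⟨pv, hpv⟩, i⟩
      have hpv1 : pv = 1 := by
        by_contra hne
        exact (Fin.cast (frk0 pv hne) i).elim0
      subst hpv1
      have hlt2 : (i : ℕ) < 1 := lt_of_lt_of_eq i.isLt frk1
      have hfin : i = j₀.snd := by
        apply Fin.ext
        show (i : ℕ) = 0
        omega
      exact Sigma.ext rfl (heq_of_eq hfin)
    let Fb : ι → D := fun pq => S1⟦(-(pq.1.1 : ℤ))⟧
    have hπι : biproduct.π Fb j₀ ≫ biproduct.ι Fb j₀ = 𝟙 (⨁ Fb) := by
      refine biproduct.hom_ext' _ _ ?_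
      intro j
      rw [huniq j]
      simp
    have hιπ : biproduct.ι Fb j₀ ≫ biproduct.π Fb j₀ = 𝟙 (Fb j₀) := biproduct.ι_π_self _ _
    let ebip : sTensor S1 (St.P (ν+1)) N ≅ S1⟦(-1:ℤ)⟧ :=
      ⟨biproduct.π Fb j₀, biproduct.ι Fb j₀, hπι, hιπ⟩
    have hu : (biproduct.ι Fb j₀ ≫ sTensorEv S1 (St.P (ν+1)) N : S1⟦(-1:ℤ)⟧ ⟶ St.P (ν+1))
        = ((Module.finBasis ℂ (S1 ⟶ (St.P (ν+1))⟦(1:ℤ)⟧)) j₀.2)⟦(-1:ℤ)⟧' ≫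
          (shiftFunctorCompIsoId D (1:ℤ) (-1:ℤ) (by ring)).hom.app (St.P (ν+1)) := by
      show biproduct.ι _ j₀ ≫ biproduct.desc _ = _
      rw [biproduct.ι_desc]
    obtain ⟨c, hc⟩ := hspanA (Module.finBasis ℂ (S1 ⟶ (St.P (ν+1))⟦(1:ℤ)⟧) j₀.2)
    have hcne : c ≠ 0 := by
      rintro rfl
      exact (Module.finBasis ℂ (S1 ⟶ (St.P (ν+1))⟦(1:ℤ)⟧)).ne_zero j₀.2
        (by rw [hc, zero_smul])
    have hiso1 : ((-c) • 𝟙 S1) ≫ ((-c)⁻¹ • 𝟙 S1) = 𝟙 S1 := by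
      simp only [Linear.smul_comp, Linear.comp_smul, Category.comp_id, Category.id_comp,
        smul_smul]
      rw [inv_mul_cancel₀ (neg_ne_zero.mpr hcne), one_smul]
    have hiso2 : ((-c)⁻¹ • 𝟙 S1) ≫ ((-c) • 𝟙 S1) = 𝟙 S1 := by
      simp only [Linear.smul_comp, Linear.comp_smul, Category.comp_id, Category.id_comp,
        smul_smul]
      rw [mul_inv_cancel₀ (neg_ne_zero.mpr hcne), one_smul]
    haveI hIso : IsIso ((-c) • 𝟙 S1) := ⟨⟨(-c)⁻¹ • 𝟙 S1, hiso1, hiso2⟩⟩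
    have hδ : (Triangle.mk (St.a ν + St.b ν) g w).invRotate.mor₁
        = -(w⟦(-1:ℤ)⟧' ≫
            (shiftFunctorCompIsoId D (1:ℤ) (-1:ℤ) (by ring)).hom.app (St.P (ν+1))) := rfl
    have hεδ : (((-c) • 𝟙 S1)⟦(-1:ℤ)⟧') ≫ (Triangle.mk (St.a ν + St.b ν) g w).invRotate.mor₁
        = biproduct.ι Fb j₀ ≫ sTensorEv S1 (St.P (ν+1)) N := by
      have hv : (Module.finBasis ℂ (S1 ⟶ (St.P (ν+1))⟦(1:ℤ)⟧)) j₀.2 = (c • 𝟙 S1) ≫ w := by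
        rw [hc, Linear.smul_comp, Category.id_comp]
      have e1 : ((-c) • 𝟙 S1)⟦(-1:ℤ)⟧' ≫ (-(w⟦(-1:ℤ)⟧' ≫ (shiftFunctorCompIsoId D (1:ℤ) (-1:ℤ) (by ring)).hom.app (St.P (ν+1))))
          = ((c • 𝟙 S1) ≫ w)⟦(-1:ℤ)⟧' ≫ (shiftFunctorCompIsoId D (1:ℤ) (-1:ℤ) (by ring)).hom.app (St.P (ν+1)) := by
        rw [Functor.map_comp, Category.assoc, Preadditive.comp_neg,
          ← Preadditive.neg_comp, ← Functor.map_neg, ← neg_smul, neg_neg]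
      exact e1.trans (by rw [← hv]; exact hu.symm)
    have hEV : sTensorEv S1 (St.P (ν+1)) N
        = biproduct.π Fb j₀ ≫ (biproduct.ι Fb j₀ ≫ sTensorEv S1 (St.P (ν+1)) N) := by
      exact ((Category.id_comp _).symm.trans
        (congrArg (fun t => t ≫ sTensorEv S1 (St.P (ν+1)) N) hπι.symm)).trans (Category.assoc _ _ _)
    have hcomm : (Triangle.mk (sTensorEv S1 (St.P (ν+1)) N) gA wA).mor₁
          ≫ (Iso.refl (St.P (ν+1))).hom
        = (ebip ≪≫ (shiftFunctor D (-1:ℤ)).mapIso ⟨(-c) • 𝟙 S1, (-c)⁻¹ • 𝟙 S1, hiso1, hiso2⟩).hom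
          ≫ (Triangle.mk (St.a ν + St.b ν) g w).invRotate.mor₁ := by
      show sTensorEv S1 (St.P (ν+1)) N ≫ 𝟙 (St.P (ν+1))
        = (biproduct.π Fb j₀ ≫ (((-c) • 𝟙 S1)⟦(-1:ℤ)⟧'))
          ≫ (Triangle.mk (St.a ν + St.b ν) g w).invRotate.mor₁
      exact (Category.comp_id _).trans (hEV.trans
        ((congrArg (fun t => biproduct.π Fb j₀ ≫ t) hεδ.symm).trans (Category.assoc _ _ _).symm))
    exact ⟨Triangle.π₃.mapIso (isoTriangleOfIso₁₂
      (Triangle.mk (sTensorEv S1 (St.P (ν+1)) N) gA wA)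
      ((Triangle.mk (St.a ν + St.b ν) g w).invRotate) hdist (inv_rot_of_distTriang _ hT)
      (ebip ≪≫ (shiftFunctor D (-1:ℤ)).mapIso ⟨(-c) • 𝟙 S1, (-c)⁻¹ • 𝟙 S1, hiso1, hiso2⟩) (Iso.refl _) hcomm)⟩
  · -- the twist fixes P k for small k
    intro k h1 h2
    obtain ⟨m, hm⟩ : ∃ m, ν = k + (m + 1) := ⟨ν - k - 1, by omega⟩
    obtain ⟨N, gk, wk, hbound, hdist⟩ := hTw.twistTriangle (St.P k)
    have hall := hvansmall k m h1 hm
    have hz : IsZero (sTensor S1 (St.P k) N) := by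
      rw [IsZero.iff_id_eq_zero]
      refine biproduct.hom_ext _ _ ?_
      intro j
      have h0 : Module.finrank ℂ (S1 ⟶ (St.P k)⟦(j.1.1 : ℤ)⟧) = 0 := by
        haveI : Subsingleton (S1 ⟶ (St.P k)⟦(j.1.1 : ℤ)⟧) :=
          ⟨fun u₁ u₂ => by rw [hall _ u₁, hall _ u₂]⟩
        exact Module.finrank_zero_of_subsingleton
      exact (Fin.cast h0 j.2).elim0
    have hz2 : IsZero ((0 : D)⟦(-1:ℤ)⟧) := Functor.map_isZero _ (isZero_zero D)
    have e₁ : sTensor S1 (St.P k) N ≅ (0 : D)⟦(-1:ℤ)⟧ := hz.iso hz2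
    exact ⟨Triangle.π₃.mapIso (isoTriangleOfIso₁₂ _ _ hdist
      (inv_rot_of_distTriang _ (Pretriangulated.contractible_distinguished (St.P k)))
      e₁ (Iso.refl _) (hz.eq_of_src _ _))⟩


end CHS
end
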